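/- arXiv:0709.0180 — 12 statements merged into one kernel-verified Lean document; each statement's English description precedes it below -/
import Mathlib

section
/- Let n ≥ 2 be an integer, let m, ω, ħ be positive reals and c ≥ 0, and set ω̃_j = sqrt(ω² + 4c·sin²(jπ/(2(n+1)))) for j = 1,…,n. Let A be an associative unital ℂ-algebra and let a_1^+,…,a_n^+, a_1^-,…,a_n^- be arbitrary elements of A. Define, for r = 1,…,n, q_r = Σ_{j=1}^n sqrt(ħ/(m(n+1)ω̃_j))·sin(rjπ/(n+1))·(a_j^+ + a_j^-) and p_r = Σ_{j=1}^n i·sqrt(m ω̃_j ħ/(n+1))·sin(rjπ/(n+1))·(a_j^+ − a_j^-), with the fixed-wall convention q_0 = q_{n+1} = 0. Then Σ_{r=1}^n ( p_r²/(2m) + (mω²/2) q_r² ) + (cm/2) Σ_{r=0}^{n} (q_r − q_{r+1})² = Σ_{j=1}^n (ħ ω̃_j/2)(a_j^- a_j^+ + a_j^+ a_j^-) holds in A. -/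
noncomputable section

open Real Finset


private lemma tele_cos (n : ℕ) (θ : ℝ) :
    (2 * Real.sin (θ/2)) * ∑ r ∈ Finset.Icc 1 n, Real.cos (r * θ)
      = Real.sin ((n+1) * θ - θ/2) - Real.sin (θ/2) := by
  induction n with
  | zero =>
    simp only [Nat.cast_zero]
    rw [show (0+1) * θ - θ/2 = θ/2 by ring]
    simp
  | succ n ih =>
    rw [Finset.sum_Icc_succ_top (by omega), mul_add, ih]
    push_cast
    rw [show ((n:ℝ)+1+1) * θ - θ/2 = ((n:ℝ)+1)*θ + θ/2 by ring, Real.sin_add,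
      Real.sin_sub]
    ring

private lemma cos_sum_eval (n : ℕ) (θ : ℝ) (h1 : Real.sin (θ/2) ≠ 0)
    (h2 : Real.sin ((n+1) * θ) = 0) :
    ∑ r ∈ Finset.Icc 1 n, Real.cos (r * θ) = -(Real.cos ((n+1)*θ) + 1)/2 := by
  have ht := tele_cos n θ
  rw [Real.sin_sub, h2] at ht
  have h2s : (2:ℝ) * Real.sin (θ/2) ≠ 0 := mul_ne_zero two_ne_zero h1
  apply mul_left_cancel₀ h2s
  rw [ht]; ring

private lemma sin_half_ne (n : ℕ) (d : ℝ) (hd : d ≠ 0) (hdlt : |d| < 2*(n+1)) :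
    Real.sin (d * π / (2*(n+1))) ≠ 0 := by
  have hN : (0:ℝ) < 2*((n:ℝ)+1) := by positivity
  rcases lt_or_gt_of_ne hd with h | h
  · have h1 : 0 < (-d) * π / (2*(n+1)) := by
      apply div_pos (mul_pos (by linarith) Real.pi_pos) hN
    have h2 : (-d) * π / (2*(n+1)) < π := by
      rw [div_lt_iff₀ hN]
      have : -d < 2*((n:ℝ)+1) := by rw [abs_lt] at hdlt; linarith [hdlt.1]
      nlinarith [Real.pi_pos]
    have := Real.sin_pos_of_pos_of_lt_pi h1 h2
    rw [show (-d) * π / (2*((n:ℝ)+1)) = -(d * π / (2*(n+1))) by ring, Real.sin_neg] at this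
    linarith
  · have h1 : 0 < d * π / (2*(n+1)) := div_pos (mul_pos h Real.pi_pos) hN
    have h2 : d * π / (2*(n+1)) < π := by
      rw [div_lt_iff₀ hN]
      have : d < 2*((n:ℝ)+1) := by rw [abs_lt] at hdlt; linarith [hdlt.2]
      nlinarith [Real.pi_pos]
    exact ne_of_gt (Real.sin_pos_of_pos_of_lt_pi h1 h2)

private lemma sin_orth (n j k : ℕ) (hj1 : 1 ≤ j) (hjn : j ≤ n) (hk1 : 1 ≤ k) (hkn : k ≤ n) :
    ∑ r ∈ Finset.Icc 1 n, Real.sin ((r:ℝ) * j * π/(n+1)) * Real.sin ((r:ℝ) * k * π/(n+1))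
      = if j = k then ((n:ℝ)+1)/2 else 0 := by
  have hN : ((n:ℝ)+1) ≠ 0 := by positivity
  set θm : ℝ := ((j:ℝ) - k) * π / (n+1) with hθm
  set θp : ℝ := ((j:ℝ) + k) * π / (n+1) with hθp
  have key : ∀ r : ℕ, Real.sin ((r:ℝ) * j * π/(n+1)) * Real.sin ((r:ℝ) * k * π/(n+1))
      = (Real.cos (r * θm) - Real.cos (r * θp))/2 := by
    intro r
    rw [show (r:ℝ) * θm = (r:ℝ)*j*π/(n+1) - (r:ℝ)*k*π/(n+1) by rw [hθm]; ring,
        show (r:ℝ) * θp = (r:ℝ)*j*π/(n+1) + (r:ℝ)*k*π/(n+1) by rw [hθp]; ring,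
        Real.cos_sub, Real.cos_add]
    ring
  rw [Finset.sum_congr rfl (fun r _ => key r)]
  rw [← Finset.sum_div, Finset.sum_sub_distrib]
  have hj' : (1:ℝ) ≤ j := by exact_mod_cast hj1
  have hjn' : (j:ℝ) ≤ n := by exact_mod_cast hjn
  have hk' : (1:ℝ) ≤ k := by exact_mod_cast hk1
  have hkn' : (k:ℝ) ≤ n := by exact_mod_cast hkn
  -- the plus sum
  have hp1 : Real.sin (θp/2) ≠ 0 := by
    rw [show θp/2 = ((j:ℝ)+k) * π / (2*(n+1)) by rw [hθp, div_div, mul_comm ((n:ℝ)+1) 2]]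
    apply sin_half_ne n _ (by positivity)
    rw [abs_of_pos (by positivity)]
    linarith
  have hp2 : Real.sin (((n:ℝ)+1) * θp) = 0 := by
    rw [show ((n:ℝ)+1) * θp = ((j:ℝ)+k) * π by rw [hθp]; field_simp]
    have : ((j:ℝ)+k) * π = ((j+k : ℕ) : ℝ) * π := by push_cast; ring
    rw [this, Real.sin_nat_mul_pi]
  have hCp := cos_sum_eval n θp hp1 hp2
  by_cases hjk : j = k
  · subst hjk
    have hθm0 : θm = 0 := by rw [hθm]; ring
    have hconst : ∀ r ∈ Finset.Icc 1 n, Real.cos ((r:ℝ) * θm) = 1 := by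
      intro r _; rw [hθm0, mul_zero, Real.cos_zero]
    rw [Finset.sum_congr rfl hconst, Finset.sum_const, Nat.card_Icc, hCp]
    have hcos1 : Real.cos (((n:ℝ)+1) * θp) = 1 := by
      rw [show ((n:ℝ)+1) * θp = (j:ℝ) * (2*π) by rw [hθp]; field_simp; ring]
      have : (j:ℝ) * (2*π) = ((j:ℤ) : ℝ) * (2*π) := by push_cast; ring
      rw [this, Real.cos_int_mul_two_pi]
    rw [hcos1, if_pos rfl]
    simp
  · rw [if_neg hjk]
    have hm1 : Real.sin (θm/2) ≠ 0 := by
      rw [show θm/2 = ((j:ℝ)-k) * π / (2*(n+1)) by rw [hθm, div_div, mul_comm ((n:ℝ)+1) 2]]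
      apply sin_half_ne n _ (sub_ne_zero.mpr (by exact_mod_cast hjk))
      rw [abs_sub_lt_iff]
      constructor <;> linarith
    have hm2 : Real.sin (((n:ℝ)+1) * θm) = 0 := by
      rw [show ((n:ℝ)+1) * θm = ((j:ℝ)-k) * π by rw [hθm]; field_simp]
      have : ((j:ℝ)-k) * π = (((j:ℤ)-k : ℤ) : ℝ) * π := by push_cast; ring
      rw [this, Real.sin_int_mul_pi]
    have hCm := cos_sum_eval n θm hm1 hm2
    have hcoseq : Real.cos (((n:ℝ)+1) * θp) = Real.cos (((n:ℝ)+1) * θm) := by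
      have e1 : ((n:ℝ)+1) * θp = ((n:ℝ)+1) * θm + (k:ℤ) * (2*π) := by
        rw [hθp, hθm]; field_simp; push_cast; ring
      rw [e1, Real.cos_add_int_mul_two_pi]
    rw [hCm, hCp, hcoseq]
    ring

private lemma sum_shift (n : ℕ) (f : ℕ → ℝ) (h0 : f 0 = 0) (h1 : f (n+1) = 0) :
    ∑ r ∈ Finset.range (n+1), f (r+1) = ∑ r ∈ Finset.range (n+1), f r := by
  have h := Finset.sum_range_succ' f (n+1)
  rw [Finset.sum_range_succ f (n+1), h0, h1] at h
  linarith

private lemma sin_lap (n j k : ℕ) (hj1 : 1 ≤ j) (hjn : j ≤ n) (hk1 : 1 ≤ k) (hkn : k ≤ n) :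
    ∑ r ∈ Finset.Icc 0 n,
      (Real.sin ((r:ℝ)*j*π/(n+1)) - Real.sin (((r:ℝ)+1)*j*π/(n+1))) *
      (Real.sin ((r:ℝ)*k*π/(n+1)) - Real.sin (((r:ℝ)+1)*k*π/(n+1)))
      = if j = k then ((n:ℝ)+1) * (1 - Real.cos ((j:ℝ)*π/(n+1))) else 0 := by
  have hN : ((n:ℝ)+1) ≠ 0 := by positivity
  set s : ℕ → ℕ → ℝ := fun r l => Real.sin ((r:ℝ)*l*π/(n+1)) with hs
  have hs0 : ∀ l, s 0 l = 0 := by intro l; simp [hs]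
  have hstop : ∀ l : ℕ, s (n+1) l = 0 := by
    intro l
    have : ((n+1:ℕ):ℝ)*l*π/(n+1) = ((l:ℕ):ℝ)*π := by push_cast; field_simp
    simp only [hs, this, Real.sin_nat_mul_pi]
  have hIcc : Finset.Icc 0 n = Finset.range (n+1) := by
    ext x; simp [Nat.lt_succ_iff]
  -- rewrite summand in terms of s
  have hsummand : ∀ r : ℕ,
      (Real.sin ((r:ℝ)*j*π/(n+1)) - Real.sin (((r:ℝ)+1)*j*π/(n+1))) *
      (Real.sin ((r:ℝ)*k*π/(n+1)) - Real.sin (((r:ℝ)+1)*k*π/(n+1)))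
      = s r j * s r k + s (r+1) j * s (r+1) k - s r j * s (r+1) k - s (r+1) j * s r k := by
    intro r
    have hc : ∀ l : ℕ, s (r+1) l = Real.sin (((r:ℝ)+1)*l*π/(n+1)) := by
      intro l; simp only [hs]; push_cast; ring_nf
    rw [hc j, hc k, hs]; ring
  rw [hIcc, Finset.sum_congr rfl (fun r _ => hsummand r)]
  rw [Finset.sum_sub_distrib, Finset.sum_sub_distrib, Finset.sum_add_distrib]
  have hT2 : ∑ r ∈ Finset.range (n+1), s (r+1) j * s (r+1) k
      = ∑ r ∈ Finset.range (n+1), s r j * s r k := by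
    apply sum_shift n (fun r => s r j * s r k) (by show s 0 j * s 0 k = 0; rw [hs0]; ring)
      (by show s (n+1) j * s (n+1) k = 0; rw [hstop]; ring)
  have hT4 : ∑ r ∈ Finset.range (n+1), s (r+1) j * s r k
      = ∑ r ∈ Finset.range (n+1), s r j * s (r-1) k := by
    have := sum_shift n (fun r => s r j * s (r-1) k)
      (by show s 0 j * s (0-1) k = 0; rw [hs0]; ring)
      (by show s (n+1) j * s (n+1-1) k = 0; rw [hstop]; ring)
    rw [← this]
    exact Finset.sum_congr rfl (fun r _ => by simp)
  rw [hT2, hT4]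
  have hptwise : ∀ r ∈ Finset.range (n+1),
      s r j * s r k + s r j * s r k - s r j * s (r+1) k - s r j * s (r-1) k
      = (2 - 2*Real.cos ((k:ℝ)*π/(n+1))) * (s r j * s r k) := by
    intro r _
    rcases Nat.eq_zero_or_pos r with h | h
    · subst h; rw [hs0]; ring
    · have hcast : ((r-1:ℕ):ℝ) = (r:ℝ) - 1 := by
        have : 1 ≤ r := h
        push_cast [this]; ring
      have hrec : s (r+1) k + s (r-1) k = 2 * Real.cos ((k:ℝ)*π/(n+1)) * s r k := by
        simp only [hs]
        rw [show ((r+1:ℕ):ℝ)*k*π/(n+1) = (r:ℝ)*k*π/(n+1) + (k:ℝ)*π/(n+1) by push_cast; ring,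
            hcast,
            show ((r:ℝ)-1)*k*π/(n+1) = (r:ℝ)*k*π/(n+1) - (k:ℝ)*π/(n+1) by ring,
            Real.sin_add, Real.sin_sub]
        ring
      linear_combination (-(s r j)) * hrec
  have hsplit : ∑ r ∈ Finset.range (n+1), s r j * s r k
      = ∑ r ∈ Finset.Icc 1 n, s r j * s r k := by
    rw [show Finset.range (n+1) = insert 0 (Finset.Icc 1 n) by ext x; simp [Nat.lt_succ_iff]; omega,
       Finset.sum_insert (by simp), hs0]
    ring
  calc ∑ r ∈ Finset.range (n+1), s r j * s r k + ∑ r ∈ Finset.range (n+1), s r j * s r k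
        - ∑ r ∈ Finset.range (n+1), s r j * s (r+1) k
        - ∑ r ∈ Finset.range (n+1), s r j * s (r-1) k
      = ∑ r ∈ Finset.range (n+1),
          (s r j * s r k + s r j * s r k - s r j * s (r+1) k - s r j * s (r-1) k) := by
        rw [Finset.sum_sub_distrib, Finset.sum_sub_distrib, Finset.sum_add_distrib]
    _ = ∑ r ∈ Finset.range (n+1), (2 - 2*Real.cos ((k:ℝ)*π/(n+1))) * (s r j * s r k) :=
        Finset.sum_congr rfl hptwise
    _ = (2 - 2*Real.cos ((k:ℝ)*π/(n+1))) * ∑ r ∈ Finset.Icc 1 n, s r j * s r k := by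
        rw [← Finset.mul_sum, hsplit]
    _ = if j = k then ((n:ℝ)+1) * (1 - Real.cos ((j:ℝ)*π/(n+1))) else 0 := by
        rw [show (∑ r ∈ Finset.Icc 1 n, s r j * s r k)
            = if j = k then ((n:ℝ)+1)/2 else 0 from sin_orth n j k hj1 hjn hk1 hkn]
        by_cases hjk : j = k
        · subst hjk; rw [if_pos rfl, if_pos rfl]; ring
        · rw [if_neg hjk, if_neg hjk]; ring

private lemma smul_sq {A : Type*} [Ring A] [Algebra ℂ A] (n : ℕ) (x : ℕ → ℂ) (u : ℕ → A) :
    (∑ j ∈ Finset.Icc 1 n, x j • u j)^2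
      = ∑ j ∈ Finset.Icc 1 n, ∑ k ∈ Finset.Icc 1 n, (x j * x k) • (u j * u k) := by
  rw [sq, Finset.sum_mul_sum]
  exact Finset.sum_congr rfl fun j _ => Finset.sum_congr rfl fun k _ => smul_mul_smul_comm _ _ _ _

private lemma main_red {A : Type*} [Ring A] [Algebra ℂ A] (n : ℕ)
    (R : Finset ℕ) (t : ℕ → ℕ → ℝ) (e : ℕ → ℝ) (w : ℕ → A) (d : ℕ → ℝ) (κ : ℝ)
    (hort : ∀ j ∈ Finset.Icc 1 n, ∀ k ∈ Finset.Icc 1 n,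
        ∑ r ∈ R, t r j * t r k = if j = k then d j else 0) :
    ∑ r ∈ R, (κ:ℂ) • (∑ j ∈ Finset.Icc 1 n, ((e j * t r j : ℝ):ℂ) • w j)^2
      = ∑ j ∈ Finset.Icc 1 n, ((κ * (e j * e j * d j) : ℝ):ℂ) • (w j * w j) := by
  have step1 : ∀ r, (κ:ℂ) • (∑ j ∈ Finset.Icc 1 n, ((e j * t r j : ℝ):ℂ) • w j)^2
      = ∑ j ∈ Finset.Icc 1 n, ∑ k ∈ Finset.Icc 1 n,
          ((κ * ((e j * t r j) * (e k * t r k)) : ℝ):ℂ) • (w j * w k) := by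
    intro r
    rw [smul_sq, Finset.smul_sum]
    refine Finset.sum_congr rfl fun j _ => ?_
    rw [Finset.smul_sum]
    refine Finset.sum_congr rfl fun k _ => ?_
    rw [smul_smul]
    congr 1
    push_cast
    ring
  rw [Finset.sum_congr rfl fun r _ => step1 r, Finset.sum_comm]
  refine Finset.sum_congr rfl fun j hj => ?_
  rw [Finset.sum_comm]
  have inner : ∀ k ∈ Finset.Icc 1 n,
      ∑ r ∈ R, ((κ * ((e j * t r j) * (e k * t r k)) : ℝ):ℂ) • (w j * w k)
      = ((κ * (e j * e k * (if j = k then d j else 0)) : ℝ):ℂ) • (w j * w k) := by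
    intro k hk
    rw [← Finset.sum_smul]
    congr 1
    rw [← hort j hj k hk, ← Complex.ofReal_sum]
    congr 1
    rw [Finset.mul_sum, Finset.mul_sum]
    exact Finset.sum_congr rfl fun r _ => by ring
  rw [Finset.sum_congr rfl inner]
  rw [Finset.sum_eq_single_of_mem j hj (fun k _ hk => by simp [Ne.symm hk]), if_pos rfl]

/-- The Hamiltonian of a chain of `n` identical harmonic oscillators with fixed wall
boundary conditions, expressed via the discrete sine transformed operators `a_j^±`,
equals `∑_j (ħ ω̃_j / 2)(a_j^- a_j^+ + a_j^+ a_j^-)`, in any associative unital ℂ-algebra.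
Note that the defining formula for `q_r` automatically gives `q 0 = q (n+1) = 0`. -/
theorem hamiltonian_fixed_wall_sine_transform
    (n : ℕ) (hn : 2 ≤ n)
    (m ω hbar c : ℝ) (hm : 0 < m) (hω : 0 < ω) (hhbar : 0 < hbar) (hc : 0 ≤ c)
    (A : Type*) [Ring A] [Algebra ℂ A]
    (ap am : ℕ → A)
    (ωt : ℕ → ℝ)
    (hωt : ∀ j, ωt j = Real.sqrt (ω ^ 2 + 4 * c * Real.sin (j * Real.pi / (2 * (n + 1))) ^ 2))
    (q P : ℕ → A)
    (hq : ∀ r, q r = ∑ j ∈ Finset.Icc 1 n,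
      (((Real.sqrt (hbar / (m * (n + 1) * ωt j)) * Real.sin (r * j * Real.pi / (n + 1)) : ℝ) : ℂ) •
        (ap j + am j)))
    (hP : ∀ r, P r = ∑ j ∈ Finset.Icc 1 n,
      ((Complex.I * (Real.sqrt (m * ωt j * hbar / (n + 1)) * Real.sin (r * j * Real.pi / (n + 1)) : ℝ)) •
        (ap j - am j))) :
    (∑ r ∈ Finset.Icc 1 n,
      (((1 / (2 * m) : ℝ) : ℂ) • (P r) ^ 2 + ((m * ω ^ 2 / 2 : ℝ) : ℂ) • (q r) ^ 2)) +
      ((c * m / 2 : ℝ) : ℂ) • (∑ r ∈ Finset.Icc 0 n, (q r - q (r + 1)) ^ 2) =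
    ∑ j ∈ Finset.Icc 1 n,
      ((hbar * ωt j / 2 : ℝ) : ℂ) • (am j * ap j + ap j * am j) := by
  have hωtpos : ∀ j : ℕ, 0 < ωt j := by
    intro j
    rw [hωt j]
    apply Real.sqrt_pos.mpr
    nlinarith [mul_nonneg (mul_nonneg (by norm_num : (0:ℝ) ≤ 4) hc)
        (sq_nonneg (Real.sin ((j:ℝ) * π / (2*((n:ℝ)+1))))), pow_pos hω 2]
  -- notation
  set t : ℕ → ℕ → ℝ := fun r j => Real.sin ((r:ℝ) * (j:ℝ) * π / ((n:ℝ)+1)) with ht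
  set cq : ℕ → ℝ := fun j => Real.sqrt (hbar / (m * ((n:ℝ) + 1) * ωt j)) with hcq
  set cp : ℕ → ℝ := fun j => Real.sqrt (m * ωt j * hbar / ((n:ℝ) + 1)) with hcp
  -- square values
  have hcq2 : ∀ j, cq j * cq j = hbar / (m * ((n:ℝ) + 1) * ωt j) := by
    intro j
    exact Real.mul_self_sqrt (by have := hωtpos j; positivity)
  have hcp2 : ∀ j, cp j * cp j = m * ωt j * hbar / ((n:ℝ) + 1) := by
    intro j
    exact Real.mul_self_sqrt (by have := hωtpos j; positivity)
  -- orthogonality hypotheses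
  have hort1 : ∀ j ∈ Finset.Icc 1 n, ∀ k ∈ Finset.Icc 1 n,
      ∑ r ∈ Finset.Icc 1 n, t r j * t r k = if j = k then ((n:ℝ)+1)/2 else 0 := by
    intro j hj k hk
    rw [Finset.mem_Icc] at hj hk
    exact sin_orth n j k hj.1 hj.2 hk.1 hk.2
  have hort2 : ∀ j ∈ Finset.Icc 1 n, ∀ k ∈ Finset.Icc 1 n,
      ∑ r ∈ Finset.Icc 0 n, (t r j - t (r+1) j) * (t r k - t (r+1) k)
        = if j = k then ((n:ℝ)+1) * (1 - Real.cos ((j:ℝ)*π/((n:ℝ)+1))) else 0 := by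
    intro j hj k hk
    rw [Finset.mem_Icc] at hj hk
    rw [← sin_lap n j k hj.1 hj.2 hk.1 hk.2]
    refine Finset.sum_congr rfl fun r _ => ?_
    simp only [ht]
    push_cast
    ring_nf
  -- split LHS
  rw [Finset.sum_add_distrib]
  -- Piece 2 : potential term
  have hH2 : ∑ r ∈ Finset.Icc 1 n, ((m * ω ^ 2 / 2 : ℝ) : ℂ) • (q r) ^ 2
      = ∑ j ∈ Finset.Icc 1 n,
          ((m * ω ^ 2 / 2 * (cq j * cq j * (((n:ℝ)+1)/2)) : ℝ):ℂ) • ((ap j + am j) * (ap j + am j)) := by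
    simp only [hq]
    exact main_red n (Finset.Icc 1 n) t cq (fun j => ap j + am j)
      (fun j => ((n:ℝ)+1)/2) (m * ω ^ 2 / 2) hort1
  -- Piece 1 : kinetic term
  have hPX : ∀ r, ((1 / (2 * m) : ℝ) : ℂ) • (P r) ^ 2
      = ((-(1 / (2 * m)) : ℝ) : ℂ) • (∑ j ∈ Finset.Icc 1 n, ((cp j * t r j : ℝ):ℂ) • (ap j - am j))^2 := by
    intro r
    have h1 : P r = Complex.I • (∑ j ∈ Finset.Icc 1 n, ((cp j * t r j : ℝ):ℂ) • (ap j - am j)) := by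
      rw [hP, Finset.smul_sum]
      exact Finset.sum_congr rfl fun j _ => by rw [smul_smul]
    rw [h1, sq, smul_mul_smul_comm, Complex.I_mul_I]
    rw [show ((-(1 / (2 * m)) : ℝ) : ℂ) = ((1 / (2 * m) : ℝ) : ℂ) * (-1) by push_cast; ring,
      mul_smul, ← sq]
  have hH1 : ∑ r ∈ Finset.Icc 1 n, ((1 / (2 * m) : ℝ) : ℂ) • (P r) ^ 2
      = ∑ j ∈ Finset.Icc 1 n,
          ((-(1 / (2 * m)) * (cp j * cp j * (((n:ℝ)+1)/2)) : ℝ):ℂ) • ((ap j - am j) * (ap j - am j)) := by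
    rw [Finset.sum_congr rfl fun r _ => hPX r]
    exact main_red n (Finset.Icc 1 n) t cp (fun j => ap j - am j)
      (fun j => ((n:ℝ)+1)/2) (-(1 / (2 * m))) hort1
  -- Piece 3 : coupling term
  have hqd : ∀ r : ℕ, q r - q (r+1)
      = ∑ j ∈ Finset.Icc 1 n, ((cq j * (t r j - t (r+1) j) : ℝ):ℂ) • (ap j + am j) := by
    intro r
    rw [hq, hq, ← Finset.sum_sub_distrib]
    refine Finset.sum_congr rfl fun j _ => ?_
    rw [← sub_smul, ← Complex.ofReal_sub]
    congr 1
    simp only [hcq, ht]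
    ring
  have hH3 : ((c * m / 2 : ℝ) : ℂ) • (∑ r ∈ Finset.Icc 0 n, (q r - q (r + 1)) ^ 2)
      = ∑ j ∈ Finset.Icc 1 n,
          ((c * m / 2 * (cq j * cq j * (((n:ℝ)+1) * (1 - Real.cos ((j:ℝ)*π/((n:ℝ)+1))))) : ℝ):ℂ) •
            ((ap j + am j) * (ap j + am j)) := by
    rw [Finset.smul_sum, Finset.sum_congr rfl fun r _ => by rw [hqd r]]
    exact main_red n (Finset.Icc 0 n) (fun r j => t r j - t (r+1) j) cq (fun j => ap j + am j)
      (fun j => ((n:ℝ)+1) * (1 - Real.cos ((j:ℝ)*π/((n:ℝ)+1)))) (c * m / 2) hort2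
  rw [hH1, hH2, hH3, ← Finset.sum_add_distrib, ← Finset.sum_add_distrib]
  refine Finset.sum_congr rfl fun j hj => ?_
  -- scalar simplifications
  have hNne : ((n:ℝ)+1) ≠ 0 := by positivity
  have hwj := hωtpos j
  have hA : -(1 / (2 * m)) * (cp j * cp j * (((n:ℝ)+1)/2)) = -(hbar * ωt j / 4) := by
    rw [hcp2]
    field_simp
    ring
  have hsqω : ωt j * ωt j = ω^2 + 2*c*(1 - Real.cos ((j:ℝ)*π/((n:ℝ)+1))) := by
    have hnn : (0:ℝ) ≤ ω ^ 2 + 4 * c * Real.sin ((j:ℝ) * π / (2 * ((n:ℝ) + 1))) ^ 2 := by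
      nlinarith [mul_nonneg (mul_nonneg (by norm_num : (0:ℝ) ≤ 4) hc)
        (sq_nonneg (Real.sin ((j:ℝ) * π / (2*((n:ℝ)+1))))), pow_pos hω 2]
    rw [hωt j, Real.mul_self_sqrt hnn]
    have harg : (j:ℝ)*π/((n:ℝ)+1) = 2*((j:ℝ)*π/(2*((n:ℝ)+1))) := by
      field_simp
    rw [harg]
    linear_combination (2*c) * Real.cos_two_mul ((j:ℝ)*π/(2*((n:ℝ)+1)))
      + (4*c) * Real.sin_sq_add_cos_sq ((j:ℝ)*π/(2*((n:ℝ)+1)))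
  have hBC : m * ω ^ 2 / 2 * (cq j * cq j * (((n:ℝ)+1)/2))
      + c * m / 2 * (cq j * cq j * (((n:ℝ)+1) * (1 - Real.cos ((j:ℝ)*π/((n:ℝ)+1)))))
      = hbar * ωt j / 4 := by
    rw [hcq2]
    have hB : m * ω^2/2 * (hbar/(m*((n:ℝ)+1)*ωt j) * (((n:ℝ)+1)/2)) = hbar*ω^2/(4*ωt j) := by
      have hwne : ωt j ≠ 0 := hwj.ne'
      have hmne : m ≠ 0 := hm.ne'
      field_simp
      ring
    have hC : c * m / 2 * (hbar/(m*((n:ℝ)+1)*ωt j) * (((n:ℝ)+1) * (1 - Real.cos ((j:ℝ)*π/((n:ℝ)+1)))))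
        = c*hbar*(1 - Real.cos ((j:ℝ)*π/((n:ℝ)+1)))/(2*ωt j) := by
      have hwne : ωt j ≠ 0 := hwj.ne'
      have hmne : m ≠ 0 := hm.ne'
      field_simp
    rw [hB, hC, div_add_div _ _ (by positivity) (by positivity),
      div_eq_div_iff (by positivity) (by norm_num)]
    linear_combination (-8*hbar*ωt j) * hsqω
  have hexp : (ap j + am j) * (ap j + am j) = (ap j - am j) * (ap j - am j)
      + ((am j * ap j + ap j * am j) + (am j * ap j + ap j * am j)) := by noncomm_ring
  rw [add_assoc, ← add_smul, ← Complex.ofReal_add, hBC, hA, hexp, smul_add,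
    Complex.ofReal_neg, neg_smul, neg_add_cancel_left, smul_add,
    show ((hbar * ωt j / 2 : ℝ):ℂ) = ((hbar * ωt j / 4 : ℝ):ℂ) + ((hbar * ωt j / 4 : ℝ):ℂ) from by
      rw [← Complex.ofReal_add]; push_cast; ring,
    add_smul]
end
end

section
/- Let n ≥ 2 be an integer and let ω_1,…,ω_n be positive reals. Set β_j = −ω_j + (1/(n−1))·Σ_{k=1}^n ω_k and assume β_j ≥ 0 for all j. In the algebra of (n+1)×(n+1) complex matrices, with rows and columns indexed by 0,1,…,n and e_{ij} the standard matrix units, define a_j^- = sqrt(2β_j/ω_j)·e_{j0} and a_j^+ = sqrt(2β_j/ω_j)·e_{0j} for j = 1,…,n. Then: (i) the conjugate transpose of a_j^± equals a_j^∓; (ii) a_j^- a_j^+ + a_j^+ a_j^- = (2β_j/ω_j)(e_{00} + e_{jj}); and (iii) for every k = 1,…,n, the ordinary matrix commutator satisfies [ Σ_{j=1}^n ω_j (a_j^- a_j^+ + a_j^+ a_j^-), a_k^± ] = ±2 ω_k a_k^±. -/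
noncomputable section

open Matrix

/-- The gl(1|n) solution of the WQS compatibility conditions, realized by matrix units in
the defining (n+1)-dimensional representation: with `a_j^- = sqrt(2β_j/ω_j) e_{j0}` and
`a_j^+ = sqrt(2β_j/ω_j) e_{0j}`, one has (i) adjointness `(a_j^±)^† = a_j^∓`,
(ii) `a_j^- a_j^+ + a_j^+ a_j^- = (2β_j/ω_j)(e_{00} + e_{jj})`, and (iii) the triple
relations `[∑_j ω_j (a_j^- a_j^+ + a_j^+ a_j^-), a_k^±] = ± 2 ω_k a_k^±`.
Here `j : Fin n` labels the oscillator `j+1`, i.e. `j.succ : Fin (n+1)` is its row index. -/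
theorem gl1n_matrix_solution_triple_relations
    (n : ℕ) (hn : 2 ≤ n)
    (ω : Fin n → ℝ) (hω : ∀ j, 0 < ω j)
    (β : Fin n → ℝ)
    (hβdef : ∀ j, β j = -ω j + (1 / ((n : ℝ) - 1)) * ∑ k, ω k)
    (hβ : ∀ j, 0 ≤ β j)
    (am ap : Fin n → Matrix (Fin (n + 1)) (Fin (n + 1)) ℂ)
    (ham : ∀ j, am j = (Real.sqrt (2 * β j / ω j) : ℂ) • Matrix.single j.succ 0 1)
    (hap : ∀ j, ap j = (Real.sqrt (2 * β j / ω j) : ℂ) • Matrix.single 0 j.succ 1)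
    (H : Matrix (Fin (n + 1)) (Fin (n + 1)) ℂ)
    (hH : H = ∑ j, (ω j : ℂ) • (am j * ap j + ap j * am j)) :
    (∀ j, (am j)ᴴ = ap j ∧ (ap j)ᴴ = am j) ∧
    (∀ j, am j * ap j + ap j * am j =
      ((2 * β j / ω j : ℝ) : ℂ) •
        (Matrix.single (0 : Fin (n + 1)) 0 1 + Matrix.single j.succ j.succ 1)) ∧
    (∀ k, H * ap k - ap k * H = ((2 * ω k : ℝ) : ℂ) • ap k ∧
          H * am k - am k * H = -(((2 * ω k : ℝ) : ℂ) • am k)) := by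
  have hn1 : ((n : ℝ) - 1) ≠ 0 := by
    have h2 : (2 : ℝ) ≤ (n : ℝ) := by exact_mod_cast hn
    linarith
  -- squared coefficients
  have hc2 : ∀ j, (↑(Real.sqrt (2 * β j / ω j)) : ℂ) * ↑(Real.sqrt (2 * β j / ω j))
      = ((2 * β j / ω j : ℝ) : ℂ) := by
    intro j
    rw [← Complex.ofReal_mul, Real.mul_self_sqrt (div_nonneg (by linarith [hβ j]) (hω j).le)]
  -- sum of betas
  have hsumβ : ∀ k, (∑ j, β j) - β k = ω k := by
    intro k
    have h1 : ∑ j, β j = (1 / ((n : ℝ) - 1)) * ∑ k, ω k := by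
      simp only [hβdef]
      rw [Finset.sum_add_distrib, Finset.sum_const, Finset.card_univ, Fintype.card_fin,
        nsmul_eq_mul]
      have hneg : ∑ j : Fin n, -ω j = -∑ j, ω j := by
        rw [Finset.sum_neg_distrib]
      rw [hneg]
      field_simp
      ring
    rw [h1, hβdef k]
    ring
  -- part (i)
  have part1 : ∀ j, (am j)ᴴ = ap j ∧ (ap j)ᴴ = am j := by
    intro j
    constructor <;>
    · rw [ham, hap, Matrix.conjTranspose_smul]
      congr 1
      · simp [Complex.conj_ofReal]
      · ext a b
        simp [Matrix.conjTranspose_apply, Matrix.single, and_comm]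
  -- part (ii)
  have part2 : ∀ j, am j * ap j + ap j * am j =
      ((2 * β j / ω j : ℝ) : ℂ) •
        (Matrix.single (0 : Fin (n + 1)) 0 1 + Matrix.single j.succ j.succ 1) := by
    intro j
    rw [ham, hap, smul_mul_smul_comm, smul_mul_smul_comm,
      Matrix.single_mul_single_same, Matrix.single_mul_single_same, hc2, mul_one, smul_add]
    exact add_comm _ _
  -- simplified H
  have hH' : H = ∑ j, ((2 * β j : ℝ) : ℂ) •
      (Matrix.single (0 : Fin (n + 1)) 0 1 + Matrix.single j.succ j.succ 1) := by
    rw [hH]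
    refine Finset.sum_congr rfl fun j _ => ?_
    rw [part2 j, smul_smul, ← Complex.ofReal_mul]
    congr 2
    field_simp [(hω j).ne']
  refine ⟨part1, part2, fun k => ?_⟩
  have hcoef : (∑ j : Fin n, ((2 * β j : ℝ) : ℂ)) - ((2 * β k : ℝ) : ℂ)
      = ((2 * ω k : ℝ) : ℂ) := by
    rw [← Complex.ofReal_sum, ← Complex.ofReal_sub, Complex.ofReal_inj, ← Finset.mul_sum]
    have := hsumβ k
    linarith
  constructor
  · -- ap case
    rw [hH', hap k, Finset.sum_mul, Finset.mul_sum]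
    have hL : ∀ j : Fin n, ((2 * β j : ℝ) : ℂ) •
        (Matrix.single (0 : Fin (n + 1)) 0 1 + Matrix.single j.succ j.succ 1) *
        ((Real.sqrt (2 * β k / ω k) : ℂ) • Matrix.single 0 k.succ (1:ℂ)) =
        ((2 * β j : ℝ) : ℂ) • (Real.sqrt (2 * β k / ω k) : ℂ) •
          (Matrix.single (0 : Fin (n + 1)) k.succ 1 : Matrix (Fin (n + 1)) (Fin (n + 1)) ℂ) := by
      intro j
      rw [smul_mul_assoc, mul_smul_comm, add_mul, Matrix.single_mul_single_same,
        Matrix.single_mul_single_of_ne (h := Fin.succ_ne_zero j), add_zero, mul_one]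
    simp only [hL]
    have hR : ∑ j : Fin n, ((Real.sqrt (2 * β k / ω k) : ℂ) • Matrix.single 0 k.succ 1) *
        (((2 * β j : ℝ) : ℂ) •
          (Matrix.single (0 : Fin (n + 1)) 0 1 + Matrix.single j.succ j.succ 1)) =
        ((2 * β k : ℝ) : ℂ) • (Real.sqrt (2 * β k / ω k) : ℂ) •
          (Matrix.single (0 : Fin (n + 1)) k.succ 1 : Matrix (Fin (n + 1)) (Fin (n + 1)) ℂ) := by
      rw [Finset.sum_eq_single k]
      · rw [smul_mul_assoc, mul_smul_comm, mul_add,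
          Matrix.single_mul_single_of_ne (h := Fin.succ_ne_zero k), zero_add,
          Matrix.single_mul_single_same, mul_one, smul_comm]
      · intro j _ hjk
        rw [smul_mul_assoc, mul_smul_comm, mul_add,
          Matrix.single_mul_single_of_ne (h := Fin.succ_ne_zero k),
          Matrix.single_mul_single_of_ne (h := fun h => hjk (Fin.succ_injective n h).symm)]
        simp
      · simp
    rw [hR, ← Finset.sum_smul, ← sub_smul, hcoef]
  · -- am case
    rw [hH', ham k, Finset.sum_mul, Finset.mul_sum]
    have hL : ∑ j : Fin n, (((2 * β j : ℝ) : ℂ) •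
        (Matrix.single (0 : Fin (n + 1)) 0 1 + Matrix.single j.succ j.succ 1)) *
        ((Real.sqrt (2 * β k / ω k) : ℂ) • Matrix.single k.succ 0 (1:ℂ)) =
        ((2 * β k : ℝ) : ℂ) • (Real.sqrt (2 * β k / ω k) : ℂ) •
          (Matrix.single k.succ (0 : Fin (n + 1)) 1 : Matrix (Fin (n + 1)) (Fin (n + 1)) ℂ) := by
      rw [Finset.sum_eq_single k]
      · rw [smul_mul_assoc, mul_smul_comm, add_mul,
          Matrix.single_mul_single_of_ne (h := Ne.symm (Fin.succ_ne_zero k)), zero_add,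
          Matrix.single_mul_single_same, mul_one]
      · intro j _ hjk
        rw [smul_mul_assoc, mul_smul_comm, add_mul,
          Matrix.single_mul_single_of_ne (h := Ne.symm (Fin.succ_ne_zero k)),
          Matrix.single_mul_single_of_ne (h := fun h => hjk (Fin.succ_injective n h))]
        simp
      · simp
    rw [hL]
    have hR : ∀ j : Fin n, ((Real.sqrt (2 * β k / ω k) : ℂ) • Matrix.single k.succ 0 1) *
        (((2 * β j : ℝ) : ℂ) •
          (Matrix.single (0 : Fin (n + 1)) 0 1 + Matrix.single j.succ j.succ 1)) =
        ((2 * β j : ℝ) : ℂ) • (Real.sqrt (2 * β k / ω k) : ℂ) •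
          (Matrix.single k.succ (0 : Fin (n + 1)) 1 : Matrix (Fin (n + 1)) (Fin (n + 1)) ℂ) := by
      intro j
      rw [smul_mul_assoc, mul_smul_comm, mul_add, Matrix.single_mul_single_same,
        Matrix.single_mul_single_of_ne (h := Ne.symm (Fin.succ_ne_zero j)), add_zero, one_mul,
        smul_comm]
    simp only [hR]
    rw [← Finset.sum_smul, ← sub_smul,
      show ((2 * β k : ℝ) : ℂ) - (∑ j : Fin n, ((2 * β j : ℝ) : ℂ)) = -((2 * ω k : ℝ) : ℂ) by
        rw [← hcoef]; ring]
    rw [neg_smul, smul_smul]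
end
end

section
/- Let n ≥ 2 be an integer, let m, ω, ħ be positive reals and c ≥ 0, and set ω_j = sqrt(ω² + 4c·sin²(πj/n)) for j = 1,…,n. Let A be an associative unital ℂ-algebra and let a_j^± ∈ A (j = 1,…,n) satisfy the triple relations [ Σ_{j=1}^n ω_j (a_j^- a_j^+ + a_j^+ a_j^-), a_k^± ] = ±2 ω_k a_k^± for all k = 1,…,n. Define q_r = Σ_{j=1}^n sqrt(ħ/(2 m n ω_j))·(e^{-2πi jr/n} a_j^+ + e^{2πi jr/n} a_j^-) and p_r = Σ_{j=1}^n i·sqrt(m ω_j ħ/(2n))·(e^{-2πi jr/n} a_j^+ − e^{2πi jr/n} a_j^-) for r = 1,…,n, with the cyclic conventions q_0 = q_n and q_{n+1} = q_1, and let H = Σ_{j=1}^n (ħω_j/2)(a_j^- a_j^+ + a_j^+ a_j^-). Then for every r = 1,…,n: [H, q_r] = −(iħ/m) p_r and [H, p_r] = −iħcm·q_{r−1} + iħm(ω² + 2c)·q_{r} − iħcm·q_{r+1}. -/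
noncomputable section

lemma commPair {A : Type*} [Ring A] [Algebra ℂ A] (H x y : A) (a b cx cy : ℂ)
    (hx : H * x - x * H = cx • x) (hy : H * y - y * H = cy • y) :
    H * (a • x + b • y) - (a • x + b • y) * H = (a * cx) • x + (b * cy) • y := by
  have h : H * (a • x + b • y) - (a • x + b • y) * H
      = a • (H * x - x * H) + b • (H * y - y * H) := by
    simp only [mul_add, add_mul, mul_smul_comm, smul_mul_assoc, smul_sub]; abel
  rw [h, hx, hy, smul_smul, smul_smul]

lemma commPair' {A : Type*} [Ring A] [Algebra ℂ A] (H x y : A) (a b cx cy : ℂ)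
    (hx : H * x - x * H = cx • x) (hy : H * y - y * H = cy • y) :
    H * (a • x - b • y) - (a • x - b • y) * H = (a * cx) • x - (b * cy) • y := by
  have h : H * (a • x - b • y) - (a • x - b • y) * H
      = a • (H * x - x * H) - b • (H * y - y * H) := by
    simp only [mul_sub, sub_mul, mul_smul_comm, smul_mul_assoc, smul_sub]; abel
  rw [h, hx, hy, smul_smul, smul_smul]

lemma commSum {A : Type*} [Ring A] [Algebra ℂ A] (H : A) (S : Finset ℕ) (f : ℕ → A) :
    H * (∑ j ∈ S, f j) - (∑ j ∈ S, f j) * H = ∑ j ∈ S, (H * f j - f j * H) := by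
  rw [Finset.mul_sum, Finset.sum_mul, ← Finset.sum_sub_distrib]

lemma expPair : ∀ θ : ℝ, Complex.exp ((θ:ℂ) * Complex.I) + Complex.exp (-((θ:ℂ) * Complex.I))
    = 2 * ((Real.cos θ : ℝ) : ℂ) := by
  intro θ
  rw [show -((θ:ℂ) * Complex.I) = ((-θ : ℝ):ℂ) * Complex.I by push_cast; ring]
  rw [Complex.exp_mul_I, Complex.exp_mul_I]
  push_cast
  simp [Complex.cos_neg, Complex.sin_neg]
  ring

/-- For the periodic chain: if the operators `a_j^±` satisfy the triple relations
`[∑_j ω_j (a_j^- a_j^+ + a_j^+ a_j^-), a_k^±] = ±2 ω_k a_k^±`, then the position and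
momentum operators defined by the discrete Fourier transform satisfy the compatibility
conditions `[H, q_r] = -(iħ/m) p_r` and
`[H, p_r] = -iħcm q_{r-1} + iħm(ω²+2c) q_r - iħcm q_{r+1}`.
The formula defining `q` makes it `n`-periodic, so `q 0 = q n` and `q (n+1) = q 1`. -/
theorem compatibility_conditions_periodic_from_triple_relations
    (n : ℕ) (hn : 2 ≤ n)
    (m ω hbar c : ℝ) (hm : 0 < m) (hω : 0 < ω) (hhbar : 0 < hbar) (hc : 0 ≤ c)
    (A : Type*) [Ring A] [Algebra ℂ A]
    (ap am : ℕ → A)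
    (ωf : ℕ → ℝ)
    (hωf : ∀ j, ωf j = Real.sqrt (ω ^ 2 + 4 * c * Real.sin (Real.pi * j / n) ^ 2))
    (H0 : A)
    (hH0 : H0 = ∑ j ∈ Finset.Icc 1 n, (ωf j : ℂ) • (am j * ap j + ap j * am j))
    (htriple_plus : ∀ k ∈ Finset.Icc 1 n,
      H0 * ap k - ap k * H0 = ((2 * ωf k : ℝ) : ℂ) • ap k)
    (htriple_minus : ∀ k ∈ Finset.Icc 1 n,
      H0 * am k - am k * H0 = -(((2 * ωf k : ℝ) : ℂ) • am k))
    (q P : ℕ → A)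
    (hq : ∀ r, q r = ∑ j ∈ Finset.Icc 1 n,
      ((Real.sqrt (hbar / (2 * m * n * ωf j)) : ℂ) •
        (Complex.exp (-(2 * Real.pi * Complex.I * j * r / n)) • ap j +
         Complex.exp (2 * Real.pi * Complex.I * j * r / n) • am j)))
    (hP : ∀ r, P r = ∑ j ∈ Finset.Icc 1 n,
      ((Complex.I * (Real.sqrt (m * ωf j * hbar / (2 * n)) : ℂ)) •
        (Complex.exp (-(2 * Real.pi * Complex.I * j * r / n)) • ap j -
         Complex.exp (2 * Real.pi * Complex.I * j * r / n) • am j)))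
    (H : A)
    (hH : H = ∑ j ∈ Finset.Icc 1 n, ((hbar * ωf j / 2 : ℝ) : ℂ) • (am j * ap j + ap j * am j)) :
    ∀ r ∈ Finset.Icc 1 n,
      (H * q r - q r * H = (-(Complex.I * hbar / m)) • P r) ∧
      (H * P r - P r * H =
        (-(Complex.I * hbar * c * m)) • q (r - 1) +
        (Complex.I * hbar * m * (ω ^ 2 + 2 * c)) • q r -
        (Complex.I * hbar * c * m) • q (r + 1)) := by
  intro r hr
  obtain ⟨hr1, hr2⟩ := Finset.mem_Icc.mp hr
  have hnpos : 0 < n := by omega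
  have hnR : (0:ℝ) < (n:ℝ) := by exact_mod_cast hnpos
  have hnC : (n:ℂ) ≠ 0 := by exact_mod_cast hnpos.ne'
  have hmC : (m:ℂ) ≠ 0 := by exact_mod_cast hm.ne'
  have hωpos : ∀ j : ℕ, 0 < ωf j := by
    intro j; rw [hωf]; apply Real.sqrt_pos.2; positivity
  -- H as a scalar multiple of H0
  have hHsmul : H = ((hbar / 2 : ℝ) : ℂ) • H0 := by
    rw [hH, hH0, Finset.smul_sum]
    refine Finset.sum_congr rfl fun j _ => ?_
    rw [smul_smul]
    congr 1
    push_cast; ring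
  have hcp : ∀ k ∈ Finset.Icc 1 n,
      H * ap k - ap k * H = ((hbar : ℂ) * (ωf k : ℂ)) • ap k := by
    intro k hk
    rw [hHsmul, smul_mul_assoc, mul_smul_comm, ← smul_sub, htriple_plus k hk, smul_smul]
    congr 1; push_cast; ring
  have hcm : ∀ k ∈ Finset.Icc 1 n,
      H * am k - am k * H = (-((hbar : ℂ) * (ωf k : ℂ))) • am k := by
    intro k hk
    rw [hHsmul, smul_mul_assoc, mul_smul_comm, ← smul_sub, htriple_minus k hk, smul_neg,
      smul_smul, ← neg_smul]
    congr 1; push_cast; ring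
  -- key scalar identities
  have key1 : ∀ j : ℕ, hbar * ωf j * Real.sqrt (hbar / (2 * m * (n:ℝ) * ωf j))
      = hbar / m * Real.sqrt (m * ωf j * hbar / (2 * (n:ℝ))) := by
    intro j
    have hw := hωpos j
    have h1 : hbar * ωf j * Real.sqrt (hbar / (2 * m * (n:ℝ) * ωf j))
        = Real.sqrt ((hbar * ωf j) ^ 2 * (hbar / (2 * m * (n:ℝ) * ωf j))) := by
      rw [Real.sqrt_mul (sq_nonneg _), Real.sqrt_sq (by positivity)]
    have h2 : hbar / m * Real.sqrt (m * ωf j * hbar / (2 * (n:ℝ)))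
        = Real.sqrt ((hbar / m) ^ 2 * (m * ωf j * hbar / (2 * (n:ℝ)))) := by
      rw [Real.sqrt_mul (sq_nonneg _), Real.sqrt_sq (by positivity)]
    rw [h1, h2]
    congr 1
    field_simp
  have key2 : ∀ j : ℕ, m * (ωf j) ^ 2 * Real.sqrt (hbar / (2 * m * (n:ℝ) * ωf j))
      = ωf j * Real.sqrt (m * ωf j * hbar / (2 * (n:ℝ))) := by
    intro j
    have hw := hωpos j
    have h1 : m * (ωf j) ^ 2 * Real.sqrt (hbar / (2 * m * (n:ℝ) * ωf j))
        = Real.sqrt ((m * (ωf j) ^ 2) ^ 2 * (hbar / (2 * m * (n:ℝ) * ωf j))) := by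
      rw [Real.sqrt_mul (sq_nonneg _), Real.sqrt_sq (by positivity)]
    have h2 : ωf j * Real.sqrt (m * ωf j * hbar / (2 * (n:ℝ)))
        = Real.sqrt ((ωf j) ^ 2 * (m * ωf j * hbar / (2 * (n:ℝ)))) := by
      rw [Real.sqrt_mul (sq_nonneg _), Real.sqrt_sq (by positivity)]
    rw [h1, h2]
    congr 1
    field_simp
  have key1C : ∀ j : ℕ, (hbar:ℂ) * (ωf j:ℂ) * ((Real.sqrt (hbar / (2 * m * (n:ℝ) * ωf j)) : ℝ) : ℂ)
      = (hbar:ℂ) / (m:ℂ) * ((Real.sqrt (m * ωf j * hbar / (2 * (n:ℝ))) : ℝ) : ℂ) := by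
    intro j; exact_mod_cast congrArg Complex.ofReal (key1 j)
  have key2C : ∀ j : ℕ, (m:ℂ) * (ωf j:ℂ) ^ 2 * ((Real.sqrt (hbar / (2 * m * (n:ℝ) * ωf j)) : ℝ) : ℂ)
      = (ωf j:ℂ) * ((Real.sqrt (m * ωf j * hbar / (2 * (n:ℝ))) : ℝ) : ℂ) := by
    intro j; exact_mod_cast congrArg Complex.ofReal (key2 j)
  have hwsq : ∀ j : ℕ, (ωf j) ^ 2 = ω ^ 2 + 2 * c - 2 * c * Real.cos (2 * Real.pi * j / n) := by
    intro j
    rw [hωf, Real.sq_sqrt (by positivity)]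
    rw [show 2 * Real.pi * (j:ℝ) / n = 2 * (Real.pi * j / n) by ring, Real.cos_two_mul]
    have hs := Real.sin_sq_add_cos_sq (Real.pi * j / n)
    nlinarith [hs]
  have hwsqC : ∀ j : ℕ, ((ωf j : ℝ):ℂ) ^ 2
      = (ω:ℂ) ^ 2 + 2 * (c:ℂ) - 2 * (c:ℂ) * ((Real.cos (2 * Real.pi * j / n) : ℝ) : ℂ) := by
    intro j; exact_mod_cast congrArg Complex.ofReal (hwsq j)
  have hcos : ∀ j : ℕ, Complex.exp (2 * (Real.pi:ℂ) * Complex.I * j / n)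
      + Complex.exp (-(2 * (Real.pi:ℂ) * Complex.I * j / n))
      = 2 * ((Real.cos (2 * Real.pi * j / n) : ℝ) : ℂ) := by
    intro j
    have h := expPair (2 * Real.pi * j / n)
    rw [show ((2 * Real.pi * (j:ℝ) / n : ℝ):ℂ) * Complex.I = 2 * (Real.pi:ℂ) * Complex.I * j / n
      by push_cast; ring] at h
    exact h
  -- exponential shift identities
  have hc1 : ((r - 1 : ℕ) : ℂ) = (r : ℂ) - 1 := by
    have := Nat.cast_sub (R := ℂ) hr1; simpa using this
  have hexp1 : ∀ j : ℕ, Complex.exp (-(2 * (Real.pi:ℂ) * Complex.I * j * ((r-1 : ℕ):ℂ) / n))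
      = Complex.exp (-(2 * (Real.pi:ℂ) * Complex.I * j * (r:ℂ) / n))
        * Complex.exp (2 * (Real.pi:ℂ) * Complex.I * j / n) := by
    intro j; rw [← Complex.exp_add]; congr 1; rw [hc1]; field_simp; ring
  have hexp2 : ∀ j : ℕ, Complex.exp (2 * (Real.pi:ℂ) * Complex.I * j * ((r-1 : ℕ):ℂ) / n)
      = Complex.exp (2 * (Real.pi:ℂ) * Complex.I * j * (r:ℂ) / n)
        * Complex.exp (-(2 * (Real.pi:ℂ) * Complex.I * j / n)) := by
    intro j; rw [← Complex.exp_add]; congr 1; rw [hc1]; field_simp; ring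
  have hexp3 : ∀ j : ℕ, Complex.exp (-(2 * (Real.pi:ℂ) * Complex.I * j * ((r:ℂ) + 1) / n))
      = Complex.exp (-(2 * (Real.pi:ℂ) * Complex.I * j * (r:ℂ) / n))
        * Complex.exp (-(2 * (Real.pi:ℂ) * Complex.I * j / n)) := by
    intro j; rw [← Complex.exp_add]; congr 1; field_simp; ring
  have hexp4 : ∀ j : ℕ, Complex.exp (2 * (Real.pi:ℂ) * Complex.I * j * ((r:ℂ) + 1) / n)
      = Complex.exp (2 * (Real.pi:ℂ) * Complex.I * j * (r:ℂ) / n)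
        * Complex.exp (2 * (Real.pi:ℂ) * Complex.I * j / n) := by
    intro j; rw [← Complex.exp_add]; congr 1; field_simp
  constructor
  · -- first compatibility condition
    rw [hq r, hP r, commSum, Finset.smul_sum]
    refine Finset.sum_congr rfl fun j hj => ?_
    rw [mul_smul_comm, smul_mul_assoc, ← smul_sub,
      commPair H (ap j) (am j) _ _ _ _ (hcp j hj) (hcm j hj)]
    match_scalars
    · linear_combination Complex.exp (-(2 * (Real.pi:ℂ) * Complex.I * j * (r:ℂ) / n)) * key1C j
        + ((hbar:ℂ) / m * ((Real.sqrt (m * ωf j * hbar / (2 * (n:ℝ))) : ℝ) : ℂ)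
            * Complex.exp (-(2 * (Real.pi:ℂ) * Complex.I * j * (r:ℂ) / n))) * Complex.I_sq
    · linear_combination -Complex.exp (2 * (Real.pi:ℂ) * Complex.I * j * (r:ℂ) / n) * key1C j
        - ((hbar:ℂ) / m * ((Real.sqrt (m * ωf j * hbar / (2 * (n:ℝ))) : ℝ) : ℂ)
            * Complex.exp (2 * (Real.pi:ℂ) * Complex.I * j * (r:ℂ) / n)) * Complex.I_sq
  · -- second compatibility condition
    rw [hP r, hq (r-1), hq r, hq (r+1), commSum, Finset.smul_sum, Finset.smul_sum,
      Finset.smul_sum, ← Finset.sum_add_distrib, ← Finset.sum_sub_distrib]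
    refine Finset.sum_congr rfl fun j hj => ?_
    rw [mul_smul_comm, smul_mul_assoc, ← smul_sub,
      commPair' H (ap j) (am j) _ _ _ _ (hcp j hj) (hcm j hj)]
    match_scalars
    · rw [hexp1 j, hexp3 j]
      linear_combination
        (-(Complex.I * Complex.exp (-(2 * (Real.pi:ℂ) * Complex.I * j * (r:ℂ) / n)) * (hbar:ℂ))) * key2C j
        + (Complex.I * (hbar:ℂ) * c * m
            * ((Real.sqrt (hbar / (2 * m * (n:ℝ) * ωf j)) : ℝ) : ℂ)
            * Complex.exp (-(2 * (Real.pi:ℂ) * Complex.I * j * (r:ℂ) / n))) * hcos j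
        + (Complex.I * Complex.exp (-(2 * (Real.pi:ℂ) * Complex.I * j * (r:ℂ) / n)) * (hbar:ℂ) * m
            * ((Real.sqrt (hbar / (2 * m * (n:ℝ) * ωf j)) : ℝ) : ℂ)) * hwsqC j
    · rw [hexp2 j, hexp4 j]
      linear_combination
        (-(Complex.I * Complex.exp (2 * (Real.pi:ℂ) * Complex.I * j * (r:ℂ) / n) * (hbar:ℂ))) * key2C j
        + (Complex.I * (hbar:ℂ) * c * m
            * ((Real.sqrt (hbar / (2 * m * (n:ℝ) * ωf j)) : ℝ) : ℂ)
            * Complex.exp (2 * (Real.pi:ℂ) * Complex.I * j * (r:ℂ) / n)) * hcos j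
        + (Complex.I * Complex.exp (2 * (Real.pi:ℂ) * Complex.I * j * (r:ℂ) / n) * (hbar:ℂ) * m
            * ((Real.sqrt (hbar / (2 * m * (n:ℝ) * ωf j)) : ℝ) : ℂ)) * hwsqC j
end
end

section
/- Let n ≥ 2 be an integer, ω > 0 and c > 0 real, and set ω_j = sqrt(ω² + 4c·sin²(πj/n)) and β_j = −ω_j + (1/(n−1))·Σ_{k=1}^n ω_k for j = 1,…,n. Then: (i) ω_{n−j} = ω_j and β_{n−j} = β_j for all j = 1,…,n−1; (ii) β_1 > β_2 > ⋯ > β_{⌊n/2⌋}; (iii) β_{⌊n/2⌋} ≤ β_{⌊n/2⌋+1} < β_{⌊n/2⌋+2} < ⋯ < β_n, where β_{⌊n/2⌋} = β_{⌊n/2⌋+1} if and only if n is odd; and (iv) β_1 < β_n. -/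
noncomputable section

/-- Symmetry and monotonicity properties of the numbers
`β_j = -ω_j + (1/(n-1)) ∑_k ω_k`, `ω_j = sqrt(ω² + 4c sin²(πj/n))`, for the periodic chain:
(i) `ω_{n-j} = ω_j` and `β_{n-j} = β_j`; (ii) `β_1 > β_2 > ⋯ > β_{⌊n/2⌋}`;
(iii) `β_{⌊n/2⌋} ≤ β_{⌊n/2⌋+1} < ⋯ < β_n`, with equality iff `n` is odd; (iv) `β_1 < β_n`. -/
theorem beta_symmetry_and_monotonicity_periodic
    (n : ℕ) (hn : 2 ≤ n) (ω c : ℝ) (hω : 0 < ω) (hc : 0 < c)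
    (ωf β : ℕ → ℝ)
    (hωf : ∀ j, ωf j = Real.sqrt (ω ^ 2 + 4 * c * Real.sin (Real.pi * j / n) ^ 2))
    (hβ : ∀ j, β j = -ωf j + (1 / ((n : ℝ) - 1)) * ∑ k ∈ Finset.Icc 1 n, ωf k) :
    (∀ j, 1 ≤ j → j ≤ n - 1 → ωf (n - j) = ωf j ∧ β (n - j) = β j) ∧
    (∀ j k, 1 ≤ j → j < k → k ≤ n / 2 → β k < β j) ∧
    (β (n / 2) ≤ β (n / 2 + 1)) ∧
    (∀ j k, n / 2 + 1 ≤ j → j < k → k ≤ n → β j < β k) ∧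
    (β (n / 2) = β (n / 2 + 1) ↔ Odd n) ∧
    β 1 < β n := by
  have hnR : (0:ℝ) < (n:ℝ) := by exact_mod_cast (by omega : 0 < n)
  -- symmetry of ωf
  have hsym : ∀ j, j ≤ n → ωf (n - j) = ωf j := by
    intro j hj
    rw [hωf, hωf]
    have hc1 : ((n - j : ℕ) : ℝ) = (n:ℝ) - j := by
      push_cast [Nat.cast_sub hj]; ring
    rw [hc1]
    have harg : Real.pi * ((n:ℝ) - j) / n = Real.pi - Real.pi * j / n := by
      field_simp
    rw [harg, Real.sin_pi_sub]
  -- strict monotonicity of ωf on [0, n/2]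
  have hmono : ∀ j k : ℕ, j < k → 2 * k ≤ n → ωf j < ωf k := by
    intro j k hjk hk
    rw [hωf, hωf]
    apply Real.sqrt_lt_sqrt (by positivity)
    have hjk' : (j:ℝ) < k := by exact_mod_cast hjk
    have hk' : (2*k:ℝ) ≤ n := by exact_mod_cast hk
    have h1 : Real.pi * j / n < Real.pi * k / n := by
      apply (div_lt_div_iff_of_pos_right hnR).mpr
      exact mul_lt_mul_of_pos_left hjk' Real.pi_pos
    have h2 : Real.pi * k / n ≤ Real.pi / 2 := by
      rw [div_le_div_iff₀ hnR two_pos]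
      nlinarith [Real.pi_pos]
    have h0 : 0 ≤ Real.pi * j / n := by positivity
    have hpi := Real.pi_pos
    have hs : Real.sin (Real.pi * j / n) < Real.sin (Real.pi * k / n) :=
      Real.strictMonoOn_sin ⟨by linarith, by linarith⟩ ⟨by linarith, h2⟩ h1
    have hsn : 0 ≤ Real.sin (Real.pi * j / n) :=
      Real.sin_nonneg_of_nonneg_of_le_pi h0 (by linarith)
    have hsq : Real.sin (Real.pi * j / n) ^ 2 < Real.sin (Real.pi * k / n) ^ 2 := by
      nlinarith
    nlinarith
  -- β comparison reduces to ωf comparison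
  have hβlt : ∀ a b, ωf b < ωf a → β a < β b := by
    intro a b h; rw [hβ, hβ]; linarith
  have hβle : ∀ a b, ωf b ≤ ωf a → β a ≤ β b := by
    intro a b h; rw [hβ, hβ]; linarith
  -- the two key facts around the midpoint
  have heven : Even n → ωf (n / 2 + 1) < ωf (n / 2) := by
    intro he
    obtain ⟨m, hm⟩ := he
    have hq : n / 2 = m := by omega
    have hsub : n - (m + 1) = m - 1 := by omega
    have h1 : ωf (m - 1) < ωf m := hmono (m - 1) m (by omega) (by omega)
    have h2 : ωf (n - (m + 1)) = ωf (m + 1) := hsym (m + 1) (by omega)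
    rw [hsub] at h2
    rw [hq]; linarith
  have hoddeq : Odd n → ωf (n / 2 + 1) = ωf (n / 2) := by
    intro ho
    obtain ⟨m, hm⟩ := ho
    have hq : n / 2 = m := by omega
    have hsub : n - (m + 1) = m := by omega
    have h2 : ωf (n - (m + 1)) = ωf (m + 1) := hsym (m + 1) (by omega)
    rw [hsub] at h2
    rw [hq]; exact h2.symm
  refine ⟨?_, ?_, ?_, ?_, ?_, ?_⟩
  · -- symmetry
    intro j h1 h2
    have hs := hsym j (by omega)
    exact ⟨hs, by rw [hβ, hβ, hs]⟩
  · -- decreasing up to n/2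
    intro j k h1 hjk hk
    exact hβlt k j (hmono j k hjk (by omega))
  · -- β (n/2) ≤ β (n/2+1)
    rcases Nat.even_or_odd n with he | ho
    · exact hβle (n / 2) (n / 2 + 1) (le_of_lt (heven he))
    · exact hβle (n / 2) (n / 2 + 1) (le_of_eq (hoddeq ho))
  · -- increasing from n/2+1 to n
    intro j k hj hjk hk
    have h1 : ωf (n - k) < ωf (n - j) := hmono (n - k) (n - j) (by omega) (by omega)
    have h2 : ωf (n - k) = ωf k := hsym k hk
    have h3 : ωf (n - j) = ωf j := hsym j (by omega)
    exact hβlt j k (by linarith)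
  · -- equality iff odd
    constructor
    · intro h
      rcases Nat.even_or_odd n with he | ho
      · exfalso
        have := hβlt (n / 2) (n / 2 + 1) (heven he)
        linarith
      · exact ho
    · intro ho
      rw [hβ, hβ, hoddeq ho]
  · -- β 1 < β n
    have h0 : ωf (n - n) = ωf n := hsym n le_rfl
    rw [Nat.sub_self] at h0
    have h1 : ωf 0 < ωf 1 := hmono 0 1 one_pos (by omega)
    exact hβlt 1 n (by linarith)
end
end

section
/- Let ω > 0 and c ≥ 0 be real. For n = 3, setting ω̃_j = sqrt(ω² + 4c·sin²(jπ/8)) for j = 1, 2, 3 and β̃_3 = −ω̃_3 + (1/2)(ω̃_1 + ω̃_2 + ω̃_3), one has β̃_3 > 0; equivalently, ω̃_1 + ω̃_2 > ω̃_3. In particular, for n = 3 there is no restriction on the coupling constant c. -/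
noncomputable section

set_option maxHeartbeats 1000000

/-- For the fixed wall chain with `n = 3` oscillators: `β̃_3 > 0`, equivalently
`ω̃_1 + ω̃_2 > ω̃_3`; so for `n = 3` there is no restriction on the coupling constant. -/
theorem beta_three_fixed_wall_n_three
    (ω c : ℝ) (hω : 0 < ω) (hc : 0 ≤ c)
    (ωt : ℕ → ℝ)
    (hωt : ∀ j, ωt j = Real.sqrt (ω ^ 2 + 4 * c * Real.sin (j * Real.pi / 8) ^ 2))
    (β3 : ℝ) (hβ3 : β3 = -ωt 3 + (1 / 2) * (ωt 1 + ωt 2 + ωt 3)) :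
    0 < β3 ∧ ωt 3 < ωt 1 + ωt 2 := by
  have h1 := hωt 1
  have h2 := hωt 2
  have h3 := hωt 3
  push_cast at h1 h2 h3
  have ht : Real.sqrt 2 ^ 2 = 2 := Real.sq_sqrt (by norm_num)
  have ht0 : (0:ℝ) ≤ Real.sqrt 2 := Real.sqrt_nonneg 2
  have ht1 : (1:ℝ) < Real.sqrt 2 := by nlinarith
  have ht2 : Real.sqrt 2 < 2 := by nlinarith
  -- sin squares
  have e1 : Real.sin (1 * Real.pi / 8) ^ 2 = (2 - Real.sqrt 2) / 4 := by
    rw [show (1:ℝ) * Real.pi / 8 = Real.pi / 8 by ring, Real.sin_pi_div_eight]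
    rw [div_pow, Real.sq_sqrt (by nlinarith)]
    norm_num
  have e2 : Real.sin (2 * Real.pi / 8) ^ 2 = 1 / 2 := by
    rw [show (2:ℝ) * Real.pi / 8 = Real.pi / 4 by ring, Real.sin_pi_div_four]
    rw [div_pow, ht]; norm_num
  have e3 : Real.sin (3 * Real.pi / 8) ^ 2 = (2 + Real.sqrt 2) / 4 := by
    rw [show (3:ℝ) * Real.pi / 8 = Real.pi / 2 - Real.pi / 8 by ring,
      Real.sin_pi_div_two_sub, Real.cos_pi_div_eight]
    rw [div_pow, Real.sq_sqrt (by nlinarith)]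
    norm_num
  rw [e1] at h1; rw [e2] at h2; rw [e3] at h3
  set t := Real.sqrt 2 with htdef
  set a := ω ^ 2 with hadef
  have ha : 0 < a := by positivity
  have hx : (0:ℝ) < a + 4 * c * ((2 - t) / 4) := by nlinarith
  have hy : (0:ℝ) < a + 4 * c * (1 / 2) := by nlinarith
  set sx := ωt 1 with hsx
  set sy := ωt 2 with hsy
  have hxp : 0 < sx := h1 ▸ Real.sqrt_pos.mpr hx
  have hyp : 0 < sy := h2 ▸ Real.sqrt_pos.mpr hy
  have hx2 : sx ^ 2 = a + 4 * c * ((2 - t) / 4) := by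
    rw [h1, Real.sq_sqrt hx.le]
  have hy2 : sy ^ 2 = a + 4 * c * (1 / 2) := by
    rw [h2, Real.sq_sqrt hy.le]
  have hprod : (2 * t - 2) * c - a < 2 * (sx * sy) := by
    rcases le_or_gt ((2 * t - 2) * c - a) 0 with h | h
    · have := mul_pos hxp hyp; linarith
    · have hsq : ((2 * t - 2) * c - a) ^ 2 < (2 * (sx * sy)) ^ 2 := by
        have hxy : (sx * sy) ^ 2 = (a + 4 * c * ((2 - t) / 4)) * (a + 4 * c * (1 / 2)) := by
          rw [mul_pow, hx2, hy2]
        nlinarith [mul_nonneg hc ha.le, mul_nonneg hc hc, mul_nonneg (mul_nonneg hc hc) ht0]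
      exact lt_of_pow_lt_pow_left₀ 2 (by positivity) hsq
  have key : ωt 3 < sx + sy := by
    rw [h3]
    rw [Real.sqrt_lt' (by linarith)]
    have hexp : (sx + sy) ^ 2 = sx ^ 2 + sy ^ 2 + 2 * (sx * sy) := by ring
    rw [hexp, hx2, hy2]
    linarith
  exact ⟨by rw [hβ3]; linarith, key⟩
end
end

section
/- Let n ≥ 2 and p ≥ 1 be integers, ħ > 0 real, ω_1,…,ω_n positive reals, and set β_j = −ω_j + (1/(n−1))·Σ_{k=1}^n ω_k, assumed nonnegative for all j, and β = Σ_{k=1}^n β_k. Let V(p) be the complex vector space with orthonormal basis w(θ;s) indexed by θ ∈ {0,1} and s = (s_1,…,s_n) ∈ ℕ^n with θ + s_1 + ⋯ + s_n = p, and let e_{k0}, e_{0k} be the linear operators on V(p) defined by e_{k0} w(θ;s) = θ·sqrt(s_k+1)·w(1−θ; s_1,…,s_k+1,…,s_n) and e_{0k} w(θ;s) = (1−θ)·sqrt(s_k)·w(1−θ; s_1,…,s_k−1,…,s_n). Define A_j^- = sqrt(2β_j/ω_j)·e_{j0}, A_j^+ = sqrt(2β_j/ω_j)·e_{0j}, and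 H = Σ_{j=1}^n (ħω_j/2)(A_j^- A_j^+ + A_j^+ A_j^-). Then every basis vector is an eigenvector of H: H w(θ;s) = ħ(β·θ + Σ_{k=1}^n β_k s_k)·w(θ;s). -/
noncomputable section

/-- In the ladder representation `V(p)` of gl(1|n) (basis vectors `w(θ;s)`, `θ ∈ {0,1}`,
`s ∈ ℕ^n`, `θ + s_1 + ⋯ + s_n = p`, with the odd generators acting by
`e_{k0} w(θ;s) = θ √(s_k+1) w(1-θ; …, s_k+1, …)` and
`e_{0k} w(θ;s) = (1-θ) √(s_k) w(1-θ; …, s_k-1, …)`), every basis vector is an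
eigenvector of the Hamiltonian `H = ∑_j (ħω_j/2)(A_j^- A_j^+ + A_j^+ A_j^-)`:
`H w(θ;s) = ħ(β θ + ∑_k β_k s_k) w(θ;s)`. Here `s : ℕ → ℕ` with the oscillator labels
running over `Finset.Icc 1 n`. -/
theorem hamiltonian_diagonal_on_ladder_basis
    (n p : ℕ) (hn : 2 ≤ n) (hp : 1 ≤ p)
    (hbar : ℝ) (hhbar : 0 < hbar)
    (ωf : ℕ → ℝ) (hω : ∀ j ∈ Finset.Icc 1 n, 0 < ωf j)
    (β : ℕ → ℝ)
    (hβdef : ∀ j, β j = -ωf j + (1 / ((n : ℝ) - 1)) * ∑ k ∈ Finset.Icc 1 n, ωf k)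
    (hβ : ∀ j ∈ Finset.Icc 1 n, 0 ≤ β j)
    (βtot : ℝ) (hβtot : βtot = ∑ k ∈ Finset.Icc 1 n, β k)
    (V : Type*) [AddCommGroup V] [Module ℂ V]
    (w : ℕ → (ℕ → ℕ) → V)
    (ek0 e0k : ℕ → Module.End ℂ V)
    (hek0 : ∀ k ∈ Finset.Icc 1 n, ∀ (θ : ℕ) (s : ℕ → ℕ), θ ≤ 1 →
      θ + ∑ i ∈ Finset.Icc 1 n, s i = p →
      ek0 k (w θ s) =
        ((θ : ℂ) * (Real.sqrt ((s k : ℝ) + 1) : ℂ)) • w (1 - θ) (Function.update s k (s k + 1)))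
    (he0k : ∀ k ∈ Finset.Icc 1 n, ∀ (θ : ℕ) (s : ℕ → ℕ), θ ≤ 1 →
      θ + ∑ i ∈ Finset.Icc 1 n, s i = p →
      e0k k (w θ s) =
        (((1 - θ : ℕ) : ℂ) * (Real.sqrt (s k) : ℂ)) • w (1 - θ) (Function.update s k (s k - 1)))
    (Am Ap : ℕ → Module.End ℂ V)
    (hAm : ∀ j, Am j = (Real.sqrt (2 * β j / ωf j) : ℂ) • ek0 j)
    (hAp : ∀ j, Ap j = (Real.sqrt (2 * β j / ωf j) : ℂ) • e0k j)
    (H : Module.End ℂ V)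
    (hH : H = ∑ j ∈ Finset.Icc 1 n,
      ((hbar * ωf j / 2 : ℝ) : ℂ) • (Am j * Ap j + Ap j * Am j)) :
    ∀ (θ : ℕ) (s : ℕ → ℕ), θ ≤ 1 → θ + ∑ i ∈ Finset.Icc 1 n, s i = p →
      H (w θ s) =
        ((hbar * (βtot * θ + ∑ k ∈ Finset.Icc 1 n, β k * s k) : ℝ) : ℂ) • w θ s := by
  intro θ s hθ hsum
  have key : ∀ j ∈ Finset.Icc 1 n,
      (Am j * Ap j + Ap j * Am j) (w θ s)
      = (((2 * β j / ωf j) * ((s j : ℝ) + (θ : ℝ)) : ℝ) : ℂ) • w θ s := by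
    intro j hj
    have hωj := hω j hj
    have hβj := hβ j hj
    set c : ℝ := Real.sqrt (2 * β j / ωf j) with hcdef
    have hc2 : c * c = 2 * β j / ωf j := Real.mul_self_sqrt (by positivity)
    have hsum_erase : s j + ∑ i ∈ (Finset.Icc 1 n) \ {j}, s i
        = ∑ i ∈ Finset.Icc 1 n, s i := by
      rw [Finset.sdiff_singleton_eq_erase]
      exact Finset.add_sum_erase _ _ hj
    interval_cases θ
    · -- θ = 0
      have h1 : (Ap j * Am j) (w 0 s) = 0 := by
        rw [Module.End.mul_apply, hAm, LinearMap.smul_apply,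
          hek0 j hj 0 s (by norm_num) (by simpa using hsum)]
        simp
      by_cases hs : s j = 0
      · have h2 : (Am j * Ap j) (w 0 s) = 0 := by
          rw [Module.End.mul_apply, hAp, LinearMap.smul_apply,
            he0k j hj 0 s (by norm_num) (by simpa using hsum)]
          simp [hs]
        rw [LinearMap.add_apply, h1, h2]
        simp [hs]
      · have hs1 : 1 ≤ s j := Nat.one_le_iff_ne_zero.mpr hs
        have hsum' : 1 + ∑ i ∈ Finset.Icc 1 n, Function.update s j (s j - 1) i = p := by
          rw [Finset.sum_update_of_mem hj]
          omega
        have hupd : Function.update (Function.update s j (s j - 1)) j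
            (Function.update s j (s j - 1) j + 1) = s := by
          rw [Function.update_self, Function.update_idem, Nat.sub_add_cancel hs1,
            Function.update_eq_self]
        have hcast : ((s j - 1 : ℕ) : ℝ) + 1 = (s j : ℝ) := by
          push_cast [Nat.cast_sub hs1]; ring
        have h2 : (Am j * Ap j) (w 0 s)
            = ((2 * β j / ωf j * (s j : ℝ) : ℝ) : ℂ) • w 0 s := by
          rw [Module.End.mul_apply, hAp, LinearMap.smul_apply,
            he0k j hj 0 s (by norm_num) (by simpa using hsum), map_smul,
            hAm, LinearMap.smul_apply, map_smul,
            hek0 j hj 1 _ (by norm_num) hsum', hupd]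
          rw [smul_smul, smul_smul, smul_smul]
          congr 1
          rw [Function.update_self, hcast]
          norm_cast
          linear_combination (Real.sqrt (s j) * Real.sqrt (s j)) * hc2 +
            (2 * β j / ωf j) * Real.mul_self_sqrt (show (0:ℝ) ≤ (s j : ℝ) from by positivity)
        rw [LinearMap.add_apply, h1, h2, add_zero]
        congr 1
        push_cast
        ring
    · -- θ = 1
      have h2 : (Am j * Ap j) (w 1 s) = 0 := by
        rw [Module.End.mul_apply, hAp, LinearMap.smul_apply,
          he0k j hj 1 s (by norm_num) hsum]
        simp
      have hsum' : 0 + ∑ i ∈ Finset.Icc 1 n, Function.update s j (s j + 1) i = p := by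
        rw [Finset.sum_update_of_mem hj]
        omega
      have hupd : Function.update (Function.update s j (s j + 1)) j
          (Function.update s j (s j + 1) j - 1) = s := by
        rw [Function.update_self, Function.update_idem, Nat.add_sub_cancel,
          Function.update_eq_self]
      have h1 : (Ap j * Am j) (w 1 s)
          = ((2 * β j / ωf j * ((s j : ℝ) + 1) : ℝ) : ℂ) • w 1 s := by
        rw [Module.End.mul_apply, hAm, LinearMap.smul_apply,
          hek0 j hj 1 s (by norm_num) hsum, map_smul,
          hAp, LinearMap.smul_apply, map_smul,
          he0k j hj 0 _ (by norm_num) hsum', hupd]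
        rw [smul_smul, smul_smul, smul_smul]
        congr 1
        rw [Function.update_self]
        norm_cast
        rw [show ((s j + 1 : ℕ) : ℝ) = (s j : ℝ) + 1 from by push_cast; ring]
        linear_combination (Real.sqrt ((s j : ℝ) + 1) * Real.sqrt ((s j : ℝ) + 1)) * hc2 +
          (2 * β j / ωf j) *
            Real.mul_self_sqrt (show (0:ℝ) ≤ (s j : ℝ) + 1 from by positivity)
      rw [LinearMap.add_apply, h1, h2, zero_add]
      congr 1
      push_cast
      ring
  rw [hH, LinearMap.sum_apply]
  rw [Finset.sum_congr rfl (fun j hj => by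
    rw [LinearMap.smul_apply, key j hj, smul_smul,
      show ((hbar * ωf j / 2 : ℝ) : ℂ) * (((2 * β j / ωf j) * ((s j : ℝ) + (θ : ℝ)) : ℝ) : ℂ)
        = ((hbar * (β j * (s j : ℝ) + β j * (θ : ℝ)) : ℝ) : ℂ) by
        rw [← Complex.ofReal_mul]
        congr 1
        have hωj : (ωf j : ℝ) ≠ 0 := (hω j hj).ne'
        field_simp])]
  rw [← Finset.sum_smul]
  congr 1
  rw [← Complex.ofReal_sum]
  congr 1
  rw [hβtot, Finset.sum_mul]
  rw [← Finset.sum_add_distrib, ← Finset.mul_sum]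
  congr 1
  apply Finset.sum_congr rfl
  intro k hk
  ring
end
end

section
/- Let n ≥ 2 and p ≥ 1 be integers, ω > 0 and c ≥ 0 real, and set ω_j = sqrt(ω² + 4c·sin²(πj/n)), β_j = −ω_j + (1/(n−1))·Σ_{k=1}^n ω_k, and β = Σ_{k=1}^n β_k. For (θ,s) with θ ∈ {0,1}, s ∈ ℕ^n and θ + Σ_k s_k = p, put E_{θ,s} = βθ + Σ_k β_k s_k. Then for every such (θ,s), the number of pairs (θ',s') with θ' ∈ {0,1}, s' ∈ ℕ^n, θ' + Σ_k s'_k = p and E_{θ',s'} = E_{θ,s} is at least Π_{k=1}^{⌊(n−1)/2⌋} (s_k + s_{n−k} + 1). -/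
noncomputable section

/-- Decomposition of a sum over `Icc 1 n` into pairs `(k, n-k)` for `k ≤ msize`
plus a remainder. -/
lemma sum_decomp_pairs {M : Type*} [AddCommMonoid M] (n msize : ℕ) (hn : 2 ≤ n)
    (hm : msize * 2 ≤ n - 1) (f : ℕ → M) :
    ∑ j ∈ Finset.Icc 1 n, f j
      = (∑ k ∈ Finset.Icc 1 msize, (f k + f (n - k)))
        + ∑ j ∈ Finset.Icc 1 n \
            (Finset.Icc 1 msize ∪ Finset.Icc (n - msize) (n - 1)), f j := by
  have hsub : Finset.Icc 1 msize ∪ Finset.Icc (n - msize) (n - 1) ⊆ Finset.Icc 1 n := by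
    intro j hj
    simp only [Finset.mem_union, Finset.mem_Icc] at hj ⊢
    omega
  have hdisj : Disjoint (Finset.Icc 1 msize) (Finset.Icc (n - msize) (n - 1)) := by
    rw [Finset.disjoint_left]
    intro a ha ha'
    simp only [Finset.mem_Icc] at ha ha'
    omega
  rw [← Finset.sum_sdiff hsub, Finset.sum_union hdisj, Finset.sum_add_distrib]
  have h2 : ∑ k ∈ Finset.Icc 1 msize, f (n - k)
      = ∑ j ∈ Finset.Icc (n - msize) (n - 1), f j := by
    refine Finset.sum_nbij' (i := fun k => n - k) (j := fun k => n - k) ?_ ?_ ?_ ?_ ?_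
    · intro a ha; simp only [Finset.mem_Icc] at ha ⊢; omega
    · intro a ha; simp only [Finset.mem_Icc] at ha ⊢; omega
    · intro a ha; simp only [Finset.mem_Icc] at ha; show n - (n - a) = a; omega
    · intro a ha; simp only [Finset.mem_Icc] at ha; show n - (n - a) = a; omega
    · intro a ha; rfl
  rw [h2]
  abel

/-- Degeneracy lower bound for the energy levels of the periodic chain in the ladder
representation `V(p)`: the number of states `(θ',s')` with the same energy as `(θ,s)`
is at least `∏_{k=1}^{⌊(n-1)/2⌋} (s_k + s_{n-k} + 1)`. -/
theorem energy_degeneracy_lower_bound_periodic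
    (n p : ℕ) (hn : 2 ≤ n) (hp : 1 ≤ p) (ω c : ℝ) (hω : 0 < ω) (hc : 0 ≤ c)
    (ωf β : ℕ → ℝ)
    (hωf : ∀ j, ωf j = Real.sqrt (ω ^ 2 + 4 * c * Real.sin (Real.pi * j / n) ^ 2))
    (hβ : ∀ j, β j = -ωf j + (1 / ((n : ℝ) - 1)) * ∑ k ∈ Finset.Icc 1 n, ωf k)
    (βtot : ℝ) (hβtot : βtot = ∑ k ∈ Finset.Icc 1 n, β k)
    (E : ℕ → (ℕ → ℕ) → ℝ)
    (hE : ∀ θ s, E θ s = βtot * θ + ∑ k ∈ Finset.Icc 1 n, β k * s k)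
    (θ : ℕ) (s : ℕ → ℕ) (hθ : θ ≤ 1)
    (hsupp : ∀ k, k ∉ Finset.Icc 1 n → s k = 0)
    (hsum : θ + ∑ k ∈ Finset.Icc 1 n, s k = p) :
    (∏ k ∈ Finset.Icc 1 ((n - 1) / 2), (s k + s (n - k) + 1)) ≤
      Set.ncard {x : ℕ × (ℕ → ℕ) | x.1 ≤ 1 ∧ (∀ k, k ∉ Finset.Icc 1 n → x.2 k = 0) ∧
        x.1 + ∑ k ∈ Finset.Icc 1 n, x.2 k = p ∧ E x.1 x.2 = E θ s} := by
  classical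
  set m := (n - 1) / 2 with hm
  have hm2 : m * 2 ≤ n - 1 := Nat.div_mul_le_self (n - 1) 2
  set K : Finset ℕ := Finset.Icc 1 m with hK
  set K' : Finset ℕ := Finset.Icc (n - m) (n - 1) with hK'
  set bigSet : Set (ℕ × (ℕ → ℕ)) :=
    {x : ℕ × (ℕ → ℕ) | x.1 ≤ 1 ∧ (∀ k, k ∉ Finset.Icc 1 n → x.2 k = 0) ∧
      x.1 + ∑ k ∈ Finset.Icc 1 n, x.2 k = p ∧ E x.1 x.2 = E θ s} with hbig
  -- symmetry of β
  have hβsym : ∀ k, 1 ≤ k → k ≤ n - 1 → β (n - k) = β k := by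
    intro k hk1 hk2
    have hωsym : ωf (n - k) = ωf k := by
      rw [hωf, hωf]
      have hcast : ((n - k : ℕ) : ℝ) = (n : ℝ) - (k : ℝ) := by
        have : k ≤ n := by omega
        push_cast [this]; ring
      have hn0 : (n : ℝ) ≠ 0 := by
        have : 0 < n := by omega
        positivity
      have harg : Real.pi * ((n - k : ℕ) : ℝ) / n = Real.pi - Real.pi * k / n := by
        rw [hcast]; field_simp
      rw [harg, Real.sin_pi_sub]
    rw [hβ, hβ, hωsym]
  -- basic membership facts
  have hKmem : ∀ k ∈ K, 1 ≤ k ∧ k ≤ m := by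
    intro k hk; simpa [hK, Finset.mem_Icc] using hk
  have hKK' : ∀ k ∈ K, (n - k ∉ K) ∧ (n - k ∈ K') ∧ n - (n - k) = k := by
    intro k hk
    obtain ⟨h1, h2⟩ := hKmem k hk
    refine ⟨?_, ?_, by omega⟩
    · simp only [hK, Finset.mem_Icc]; omega
    · simp only [hK', Finset.mem_Icc]; omega
  -- the family of states
  set t : (∀ a ∈ K, ℕ) → ℕ → ℕ := fun g j => if h : j ∈ K then g j h else 0 with ht
  set F : (∀ a ∈ K, ℕ) → ℕ × (ℕ → ℕ) := fun g =>
    (θ, fun j => if j ∈ K then t g j else if j ∈ K' then s j + s (n - j) - t g (n - j) else s j)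
    with hF
  set P : Finset (∀ a ∈ K, ℕ) := K.pi (fun k => Finset.range (s k + s (n - k) + 1)) with hP
  have hcard : P.card = ∏ k ∈ K, (s k + s (n - k) + 1) := by
    rw [hP, Finset.card_pi]
    simp
  have hinj : Set.InjOn F ↑P := by
    intro g1 _ g2 _ he
    funext a ha
    have h2 := congrFun (congrArg Prod.snd he) a
    simpa [hF, ht, ha] using h2
  have hmem : ∀ g ∈ P, F g ∈ bigSet := by
    intro g hg
    have hgle : ∀ k (h : k ∈ K), g k h ≤ s k + s (n - k) := by
      intro k h
      have := Finset.mem_pi.mp hg k h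
      simpa [Nat.lt_succ_iff] using Finset.mem_range.mp this
    have hs'K : ∀ k (hk : k ∈ K), (F g).2 k = g k hk := by
      intro k hk; simp [hF, ht, hk]
    have hs'K' : ∀ k (hk : k ∈ K), (F g).2 (n - k) = s (n - k) + s k - g k hk := by
      intro k hk
      obtain ⟨hnk1, hnk2, hnk3⟩ := hKK' k hk
      simp [hF, ht, hnk1, hnk2, hnk3, hk]
    have hs'R : ∀ j, j ∉ K → j ∉ K' → (F g).2 j = s j := by
      intro j h1 h2; simp [hF, h1, h2]
    have hKsub : ∀ k ∈ K, k ∈ Finset.Icc 1 n := by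
      intro k hk; obtain ⟨h1, h2⟩ := hKmem k hk
      simp only [Finset.mem_Icc]; omega
    have hK'sub : ∀ k ∈ K', k ∈ Finset.Icc 1 n := by
      intro k hk; simp only [hK', Finset.mem_Icc] at hk
      simp only [Finset.mem_Icc]; omega
    -- sum preservation
    have hsum' : ∑ k ∈ Finset.Icc 1 n, (F g).2 k = ∑ k ∈ Finset.Icc 1 n, s k := by
      rw [sum_decomp_pairs n m hn hm2, sum_decomp_pairs n m hn hm2]
      congr 1
      · refine Finset.sum_congr rfl ?_
        intro k hk
        rw [hs'K k hk, hs'K' k hk]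
        have := hgle k hk
        omega
      · refine Finset.sum_congr rfl ?_
        intro j hj
        simp only [Finset.mem_sdiff, Finset.mem_union, not_or] at hj
        exact hs'R j hj.2.1 hj.2.2
    -- energy preservation
    have hE' : ∑ k ∈ Finset.Icc 1 n, β k * (F g).2 k = ∑ k ∈ Finset.Icc 1 n, β k * s k := by
      rw [sum_decomp_pairs n m hn hm2, sum_decomp_pairs n m hn hm2]
      congr 1
      · refine Finset.sum_congr rfl ?_
        intro k hk
        obtain ⟨h1, h2⟩ := hKmem k hk
        rw [hs'K k hk, hs'K' k hk, hβsym k h1 (by omega)]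
        have hle := hgle k hk
        have hcast : ((s (n - k) + s k - g k hk : ℕ) : ℝ)
            = (s (n - k) : ℝ) + s k - g k hk := by
          push_cast [Nat.cast_sub (by omega : g k hk ≤ s (n - k) + s k)]
          ring
        rw [hcast]
        ring
      · refine Finset.sum_congr rfl ?_
        intro j hj
        simp only [Finset.mem_sdiff, Finset.mem_union, not_or] at hj
        rw [hs'R j hj.2.1 hj.2.2]
    refine ⟨hθ, ?_, ?_, ?_⟩
    · intro j hj
      have h1 : j ∉ K := fun h => hj (hKsub j h)
      have h2 : j ∉ K' := fun h => hj (hK'sub j h)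
      rw [hs'R j h1 h2]
      exact hsupp j hj
    · show (F g).1 + _ = p
      rw [hsum']
      simpa [hF] using hsum
    · show E (F g).1 (F g).2 = E θ s
      rw [hE, hE, hE']
  -- finiteness of the big set
  have hfin : bigSet.Finite := by
    set f : (ℕ × (ℕ → ℕ)) → ℕ × ((Finset.Icc 1 n : Finset ℕ) → ℕ) :=
      fun x => (x.1, fun k => x.2 k) with hf
    apply Set.Finite.of_finite_image (f := f)
    · apply Set.Finite.subset
        ((Set.finite_Iic (1 : ℕ)).prod (Set.Finite.pi fun _ => Set.finite_Iic p))
      rintro y ⟨x, hx, rfl⟩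
      obtain ⟨hx1, hx2, hx3, _⟩ := hx
      constructor
      · exact hx1
      · intro k _
        have hle : x.2 k ≤ ∑ j ∈ Finset.Icc 1 n, x.2 j :=
          Finset.single_le_sum (fun i _ => Nat.zero_le _) k.2
        simp only [Set.mem_Iic]
        change x.2 k ≤ p
        omega
    · intro x hx y hy he
      obtain ⟨he1, he2⟩ := Prod.ext_iff.mp he
      refine Prod.ext he1 ?_
      funext j
      by_cases hj : j ∈ Finset.Icc 1 n
      · exact congrFun he2 ⟨j, hj⟩
      · rw [hx.2.1 j hj, hy.2.1 j hj]
  calc (∏ k ∈ K, (s k + s (n - k) + 1)) = P.card := hcard.symm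
    _ = (F '' ↑P).ncard := by
        rw [Set.ncard_image_of_injOn hinj, Set.ncard_coe_finset]
    _ ≤ bigSet.ncard := by
        apply Set.ncard_le_ncard ?_ hfin
        rintro _ ⟨g, hg, rfl⟩
        exact hmem g hg
end
end

section
/- Let n ≥ 2 and p ≥ 1 be integers, ω > 0 and c ≥ 0 real, and set ω_j = sqrt(ω² + 4c·sin²(πj/n)), β_j = −ω_j + (1/(n−1))·Σ_{k=1}^n ω_k, and β = Σ_{k=1}^n β_k. Let r = ⌊n/2⌋. Then the set of energy values { βθ + Σ_{k=1}^n β_k s_k : θ ∈ {0,1}, s ∈ ℕ^n, θ + Σ_k s_k = p } has cardinality at most C(p+r, p) + C(p+r−1, p−1), where C(·,·) denotes the binomial coefficient. -/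
noncomputable section

private lemma WQS_sum_Icc_fold {M : Type*} [AddCommMonoid M] (n : ℕ) (hn : 2 ≤ n) (f : ℕ → M) :
    ∑ k ∈ Finset.Icc 1 n, f k
      = f n + ∑ k ∈ Finset.Icc 1 (n/2), (f k + if 2*k = n then 0 else f (n-k)) := by
  set r := n / 2 with hr
  have h1 : Finset.Icc 1 n = insert n (Finset.Icc 1 (n-1)) := by
    ext x; simp only [Finset.mem_Icc, Finset.mem_insert]; omega
  have h2 : Finset.Icc 1 (n-1) = Finset.Icc 1 r ∪ Finset.Icc (r+1) (n-1) := by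
    ext x; simp only [Finset.mem_Icc, Finset.mem_union]; omega
  have hd : Disjoint (Finset.Icc 1 r) (Finset.Icc (r+1) (n-1)) := by
    rw [Finset.disjoint_left]; intro a ha hb
    simp only [Finset.mem_Icc] at ha hb; omega
  rw [h1, Finset.sum_insert (by simp only [Finset.mem_Icc]; omega), h2,
    Finset.sum_union hd]
  have h3 : ∑ k ∈ Finset.Icc (r+1) (n-1), f k = ∑ k ∈ Finset.Icc 1 (n-1-r), f (n-k) := by
    refine Finset.sum_nbij' (fun k => n - k) (fun k => n - k) ?_ ?_ ?_ ?_ ?_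
    · intro a ha; simp only [Finset.mem_Icc] at *; omega
    · intro a ha; simp only [Finset.mem_Icc] at *; omega
    · intro a ha; simp only [Finset.mem_Icc] at *; omega
    · intro a ha; simp only [Finset.mem_Icc] at *; omega
    · intro a ha; simp only [Finset.mem_Icc] at ha
      show f a = f (n - (n - a)); congr 1; omega
  have h4 : ∑ k ∈ Finset.Icc 1 (n-1-r), f (n-k)
      = ∑ k ∈ Finset.Icc 1 r, (if 2*k = n then 0 else f (n-k)) := by
    have e1 : ∑ k ∈ Finset.Icc 1 (n-1-r), f (n-k)
        = ∑ k ∈ Finset.Icc 1 (n-1-r), (if 2*k = n then 0 else f (n-k)) := by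
      refine Finset.sum_congr rfl fun x hx => ?_
      simp only [Finset.mem_Icc] at hx
      rw [if_neg]; omega
    rw [e1]
    refine Finset.sum_subset (fun x hx => ?_) (fun x hx hxn => ?_)
    · simp only [Finset.mem_Icc] at *; omega
    · simp only [Finset.mem_Icc] at hx hxn
      rw [if_pos]; omega
  rw [h3, h4, Finset.sum_add_distrib]

private lemma WQS_msum {ι κ : Type*} (s : Finset ι) (m : ι → Multiset κ) (f : κ → ℝ) :
    ((∑ i ∈ s, m i).map f).sum = ∑ i ∈ s, ((m i).map f).sum := by
  induction s using Finset.cons_induction with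
  | empty => simp
  | cons a s ha ih => simp [Finset.sum_cons, ih]

/-- Upper bound on the number of distinct energy levels of the periodic chain in the
ladder representation `V(p)`: with `r = ⌊n/2⌋`, the set of energy values
`{βθ + ∑_k β_k s_k}` has at most `C(p+r, p) + C(p+r-1, p-1)` elements. -/
theorem number_of_energy_levels_upper_bound_periodic
    (n p : ℕ) (hn : 2 ≤ n) (hp : 1 ≤ p) (ω c : ℝ) (hω : 0 < ω) (hc : 0 ≤ c)
    (ωf β : ℕ → ℝ)
    (hωf : ∀ j, ωf j = Real.sqrt (ω ^ 2 + 4 * c * Real.sin (Real.pi * j / n) ^ 2))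
    (hβ : ∀ j, β j = -ωf j + (1 / ((n : ℝ) - 1)) * ∑ k ∈ Finset.Icc 1 n, ωf k)
    (βtot : ℝ) (hβtot : βtot = ∑ k ∈ Finset.Icc 1 n, β k) :
    Set.ncard {x : ℝ | ∃ (θ : ℕ) (s : ℕ → ℕ), θ ≤ 1 ∧
        θ + ∑ k ∈ Finset.Icc 1 n, s k = p ∧
        x = βtot * θ + ∑ k ∈ Finset.Icc 1 n, β k * s k} ≤
      Nat.choose (p + n / 2) p + Nat.choose (p + n / 2 - 1) (p - 1) := by
  -- symmetry of the frequencies and of β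
  have hωsym : ∀ k, k ≤ n → ωf (n - k) = ωf k := by
    intro k hk
    rw [hωf, hωf]
    have h1 : ((n - k : ℕ) : ℝ) = (n : ℝ) - k := by push_cast [hk]; ring
    have hn0 : (n : ℝ) ≠ 0 := by positivity
    have h2 : Real.pi * ((n : ℝ) - k) / n = Real.pi - Real.pi * k / n := by
      field_simp
    rw [h1, h2, Real.sin_pi_sub]
  have hβsym : ∀ k, k ≤ n → β (n - k) = β k := by
    intro k hk; rw [hβ, hβ, hωsym k hk]
  set r := n / 2 with hr
  set W : ℕ → ℝ := fun j => if j = r then β n else β (j+1) with hW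
  set F : Sym (Fin (r+1)) p ⊕ Sym (Fin (r+1)) (p-1) → ℝ := Sum.elim
      (fun m => ((m : Multiset (Fin (r+1))).map (fun i : Fin (r+1) => W i)).sum)
      (fun m => βtot + ((m : Multiset (Fin (r+1))).map (fun i : Fin (r+1) => W i)).sum)
    with hF
  have hsub : {x : ℝ | ∃ (θ : ℕ) (s : ℕ → ℕ), θ ≤ 1 ∧
        θ + ∑ k ∈ Finset.Icc 1 n, s k = p ∧
        x = βtot * θ + ∑ k ∈ Finset.Icc 1 n, β k * s k} ⊆ F '' Set.univ := by
    rintro x ⟨θ, s, hθ, hsum, rfl⟩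
    set T : ℕ → ℕ := fun j => if j = r then s n
        else s (j+1) + (if 2*(j+1) = n then 0 else s (n - (j+1))) with hT
    -- the tuple T has the same total as s
    have hTsum : ∑ j ∈ Finset.range (r+1), T j = ∑ k ∈ Finset.Icc 1 n, s k := by
      rw [Finset.sum_range_succ, WQS_sum_Icc_fold n hn s, ← hr]
      have e : ∑ j ∈ Finset.range r, T j
          = ∑ k ∈ Finset.Icc 1 r, (s k + if 2*k = n then 0 else s (n-k)) := by
        have hIco : Finset.Icc 1 r = Finset.Ico 1 (r+1) := by
          ext x; simp only [Finset.mem_Icc, Finset.mem_Ico]; omega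
        rw [hIco, Finset.sum_Ico_eq_sum_range]
        have hrr : r + 1 - 1 = r := by omega
        rw [hrr]
        refine Finset.sum_congr rfl fun j hj => ?_
        simp only [Finset.mem_range] at hj
        have h1j : 1 + j = j + 1 := by omega
        simp only [hT, h1j, if_neg (show ¬ j = r by omega)]
      have hTr : T r = s n := by simp [hT]
      rw [e, hTr]
      omega
    -- the weighted sums agree
    have hWsum : ∑ j ∈ Finset.range (r+1), W j * T j
        = ∑ k ∈ Finset.Icc 1 n, β k * s k := by
      rw [Finset.sum_range_succ, WQS_sum_Icc_fold n hn (fun k => β k * s k), ← hr]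
      have e : ∑ j ∈ Finset.range r, W j * T j
          = ∑ k ∈ Finset.Icc 1 r, (β k * s k + if 2*k = n then 0 else β (n-k) * s (n-k)) := by
        have hIco : Finset.Icc 1 r = Finset.Ico 1 (r+1) := by
          ext x; simp only [Finset.mem_Icc, Finset.mem_Ico]; omega
        rw [hIco, Finset.sum_Ico_eq_sum_range]
        have hrr : r + 1 - 1 = r := by omega
        rw [hrr]
        refine Finset.sum_congr rfl fun j hj => ?_
        simp only [Finset.mem_range] at hj
        have h1j : 1 + j = j + 1 := by omega
        simp only [hT, hW, h1j, if_neg (show ¬ j = r by omega)]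
        rw [hβsym (j+1) (by omega)]
        push_cast
        rw [mul_add, mul_ite, mul_zero]
      have hWTr : W r * (T r : ℝ) = β n * (s n : ℝ) := by simp [hW, hT]
      rw [e, hWTr]
      ring
    -- build the multiset
    set m : Multiset (Fin (r+1)) := ∑ i : Fin (r+1), (T i) • ({i} : Multiset (Fin (r+1)))
      with hm
    have hcard : Multiset.card m = ∑ j ∈ Finset.range (r+1), T j := by
      rw [hm]
      rw [← Fin.sum_univ_eq_sum_range T (r+1)]
      simp
    have hmsum : (m.map (fun i : Fin (r+1) => W i)).sum
        = ∑ j ∈ Finset.range (r+1), W j * T j := by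
      rw [hm, WQS_msum, ← Fin.sum_univ_eq_sum_range (fun j => W j * T j) (r+1)]
      refine Finset.sum_congr rfl fun i _ => ?_
      rw [Multiset.map_nsmul]
      simp only [Multiset.map_singleton, Multiset.sum_nsmul, Multiset.sum_singleton,
        nsmul_eq_mul, mul_comm]
    interval_cases θ
    · refine ⟨Sum.inl (Sym.mk m ?_), Set.mem_univ _, ?_⟩
      · rw [hcard, hTsum]; omega
      · simp only [hF, Sum.elim_inl, Sym.coe_mk] at *
        rw [hmsum, hWsum]
        push_cast
        ring
    · refine ⟨Sum.inr (Sym.mk m ?_), Set.mem_univ _, ?_⟩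
      · rw [hcard, hTsum]; omega
      · simp only [hF, Sum.elim_inr, Sym.coe_mk] at *
        rw [hmsum, hWsum]
        push_cast
        ring
  calc Set.ncard {x : ℝ | ∃ (θ : ℕ) (s : ℕ → ℕ), θ ≤ 1 ∧
        θ + ∑ k ∈ Finset.Icc 1 n, s k = p ∧
        x = βtot * θ + ∑ k ∈ Finset.Icc 1 n, β k * s k}
      ≤ (F '' Set.univ).ncard := Set.ncard_le_ncard hsub (Set.finite_univ.image F)
    _ ≤ (Set.univ : Set (Sym (Fin (r+1)) p ⊕ Sym (Fin (r+1)) (p-1))).ncard :=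
        Set.ncard_image_le Set.finite_univ
    _ = Fintype.card (Sym (Fin (r+1)) p ⊕ Sym (Fin (r+1)) (p-1)) := by
        rw [Set.ncard_univ, Nat.card_eq_fintype_card]
    _ = Nat.choose (p + n / 2) p + Nat.choose (p + n / 2 - 1) (p - 1) := by
        rw [Fintype.card_sum, Sym.card_sym_eq_choose, Sym.card_sym_eq_choose,
          Fintype.card_fin]
        have h1 : r + 1 + p - 1 = p + n / 2 := by omega
        have h2 : r + 1 + (p - 1) - 1 = p + n / 2 - 1 := by omega
        rw [h1, h2]
end
end

section
/- Let n ≥ 2 and p ≥ 1 be integers, ω > 0 and c > 0 real, and set ω_j = sqrt(ω² + 4c·sin²(πj/n)), β_j = −ω_j + (1/(n−1))·Σ_{k=1}^n ω_k, and β = Σ_{k=1}^n β_k; assume β_j > 0 for all j. Over all pairs (θ,s) with θ ∈ {0,1}, s ∈ ℕ^n and θ + Σ_k s_k = p, the quantity E_{θ,s} = βθ + Σ_k β_k s_k attains its maximum value β + (p−1)β_n exactly at the single pair θ = 1, s = (0,…,0,p−1). -/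
noncomputable section

/-- Maximum energy of the periodic chain in the ladder representation `V(p)`: the energy
`E_{θ,s} = βθ + ∑_k β_k s_k` attains its maximum `β + (p-1)β_n` exactly at the single
state `θ = 1`, `s = (0,…,0,p-1)`. -/
theorem max_energy_periodic_unique
    (n p : ℕ) (hn : 2 ≤ n) (hp : 1 ≤ p) (ω c : ℝ) (hω : 0 < ω) (hc : 0 < c)
    (ωf β : ℕ → ℝ)
    (hωf : ∀ j, ωf j = Real.sqrt (ω ^ 2 + 4 * c * Real.sin (Real.pi * j / n) ^ 2))
    (hβ : ∀ j, β j = -ωf j + (1 / ((n : ℝ) - 1)) * ∑ k ∈ Finset.Icc 1 n, ωf k)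
    (hβpos : ∀ j ∈ Finset.Icc 1 n, 0 < β j)
    (βtot : ℝ) (hβtot : βtot = ∑ k ∈ Finset.Icc 1 n, β k)
    (E : ℕ → (ℕ → ℕ) → ℝ)
    (hE : ∀ θ s, E θ s = βtot * θ + ∑ k ∈ Finset.Icc 1 n, β k * s k) :
    ∀ (θ : ℕ) (s : ℕ → ℕ), θ ≤ 1 → (∀ k, k ∉ Finset.Icc 1 n → s k = 0) →
      θ + ∑ k ∈ Finset.Icc 1 n, s k = p →
      E θ s ≤ βtot + ((p : ℝ) - 1) * β n ∧
      (E θ s = βtot + ((p : ℝ) - 1) * β n ↔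
        (θ = 1 ∧ ∀ k, s k = if k = n then p - 1 else 0)) := by
  have hn0 : (0:ℝ) < (n:ℝ) := by positivity
  have hnn : (n:ℝ) ≠ 0 := ne_of_gt hn0
  have hωn : ωf n = ω := by
    rw [hωf]
    have hs : Real.sin (Real.pi * n / n) = 0 := by
      rw [mul_div_assoc, div_self hnn, mul_one, Real.sin_pi]
    rw [hs]
    simpa using Real.sqrt_sq hω.le
  -- strict inequality β j < β n for j ∈ [1,n], j ≠ n
  have hlt : ∀ j ∈ Finset.Icc 1 n, j ≠ n → β j < β n := by
    intro j hj hjn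
    rw [Finset.mem_Icc] at hj
    have hjlt : j < n := lt_of_le_of_ne hj.2 hjn
    have hsinpos : 0 < Real.sin (Real.pi * j / n) := by
      apply Real.sin_pos_of_pos_of_lt_pi
      · have : (0:ℝ) < (j:ℝ) := by exact_mod_cast Nat.lt_of_lt_of_le Nat.zero_lt_one hj.1
        positivity
      · have h1 : (j:ℝ)/n < 1 := by
          rw [div_lt_one hn0]; exact_mod_cast hjlt
        calc Real.pi * j / n = Real.pi * ((j:ℝ)/n) := by ring
          _ < Real.pi * 1 := by
              exact (mul_lt_mul_of_pos_left h1 Real.pi_pos)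
          _ = Real.pi := by ring
    have hωlt : ωf n < ωf j := by
      rw [hωn, hωf]
      have hX : (0:ℝ) < 4 * c * Real.sin (Real.pi * j / n) ^ 2 := by positivity
      have h2 := Real.sqrt_lt_sqrt (sq_nonneg ω)
        (show ω ^ 2 < ω ^ 2 + 4 * c * Real.sin (Real.pi * j / n) ^ 2 by linarith)
      rwa [Real.sqrt_sq hω.le] at h2
    rw [hβ j, hβ n]
    linarith
  have hle : ∀ j ∈ Finset.Icc 1 n, β j ≤ β n := by
    intro j hj
    by_cases h : j = n
    · rw [h]
    · exact (hlt j hj h).le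
  have hnmem : n ∈ Finset.Icc 1 n := by
    rw [Finset.mem_Icc]; omega
  -- β n < βtot
  have hβtotn : β n < βtot := by
    have herase : ∑ k ∈ (Finset.Icc 1 n).erase n, β k + β n = βtot := by
      rw [hβtot, Finset.sum_erase_add _ _ hnmem]
    have hpos : 0 < ∑ k ∈ (Finset.Icc 1 n).erase n, β k := by
      apply Finset.sum_pos
      · intro k hk
        exact hβpos k (Finset.mem_of_mem_erase hk)
      · refine ⟨1, ?_⟩
        rw [Finset.mem_erase, Finset.mem_Icc]
        omega
    linarith
  intro θ s hθ hs0 hsum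
  set D : ℝ := ∑ k ∈ Finset.Icc 1 n, (β n - β k) * (s k : ℝ) with hD
  have hDterm : ∀ k ∈ Finset.Icc 1 n, 0 ≤ (β n - β k) * (s k : ℝ) := by
    intro k hk
    have := hle k hk
    exact mul_nonneg (by linarith) (Nat.cast_nonneg _)
  have hD0 : 0 ≤ D := Finset.sum_nonneg hDterm
  have hScast : (∑ k ∈ Finset.Icc 1 n, (s k : ℝ)) = (p : ℝ) - θ := by
    have h := hsum
    have h2 : ((θ:ℝ)) + ∑ k ∈ Finset.Icc 1 n, (s k : ℝ) = (p : ℝ) := by exact_mod_cast h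
    linarith
  have hEval : E θ s = βtot * θ + β n * ((p : ℝ) - θ) - D := by
    rw [hE]
    have h1 : ∑ k ∈ Finset.Icc 1 n, β k * (s k : ℝ)
        = ∑ k ∈ Finset.Icc 1 n, (β n * (s k : ℝ) - (β n - β k) * (s k : ℝ)) := by
      apply Finset.sum_congr rfl
      intro k _; ring
    rw [h1, Finset.sum_sub_distrib, ← Finset.mul_sum, hScast]
    ring
  have hgap : βtot + ((p : ℝ) - 1) * β n - E θ s = (1 - (θ:ℝ)) * (βtot - β n) + D := by
    rw [hEval]; ring
  have hθcast : (θ:ℝ) ≤ 1 := by exact_mod_cast hθ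
  constructor
  · nlinarith [hD0, hθcast, hβtotn]
  constructor
  · intro heq
    have hzero : (1 - (θ:ℝ)) * (βtot - β n) + D = 0 := by linarith [hgap, heq]
    have hθ1 : θ = 1 := by
      interval_cases θ
      · exfalso
        have : (1 - ((0:ℕ):ℝ)) * (βtot - β n) > 0 := by
          push_cast; nlinarith
        nlinarith
      · rfl
    have hDzero : D = 0 := by
      subst hθ1
      push_cast at hzero
      linarith
    have hszero : ∀ k ∈ Finset.Icc 1 n, k ≠ n → s k = 0 := by
      intro k hk hkn
      have := (Finset.sum_eq_zero_iff_of_nonneg hDterm).mp hDzero k hk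
      have hbpos : 0 < β n - β k := by linarith [hlt k hk hkn]
      have : (s k : ℝ) = 0 := by
        rcases mul_eq_zero.mp this with h | h
        · linarith
        · exact h
      exact_mod_cast this
    refine ⟨hθ1, ?_⟩
    have hsn : ∑ k ∈ Finset.Icc 1 n, s k = s n := by
      apply Finset.sum_eq_single_of_mem n hnmem
      intro b hb hbn; exact hszero b hb hbn
    intro k
    by_cases hk : k = n
    · rw [hk, if_pos rfl]
      have h1 : θ + s n = p := by rw [← hsn]; exact hsum
      omega
    · rw [if_neg hk]
      by_cases hk2 : k ∈ Finset.Icc 1 n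
      · exact hszero k hk2 hk
      · exact hs0 k hk2
  · rintro ⟨hθ1, hsval⟩
    subst hθ1
    rw [hE]
    have hsumβ : ∑ k ∈ Finset.Icc 1 n, β k * (s k : ℝ) = β n * ((p:ℝ) - 1) := by
      rw [Finset.sum_eq_single_of_mem n hnmem]
      · rw [hsval n, if_pos rfl]
        have : ((p - 1 : ℕ) : ℝ) = (p:ℝ) - 1 := by
          have := hp; push_cast [Nat.cast_sub hp]; ring
        rw [this]
      · intro b _ hbn
        rw [hsval b, if_neg hbn]
        simp
    rw [hsumβ]
    push_cast
    ring
end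
end

section
/- Let n ≥ 2 and p ≥ 1 be integers, ω > 0 and c > 0 real, and set ω_j = sqrt(ω² + 4c·sin²(πj/n)), β_j = −ω_j + (1/(n−1))·Σ_{k=1}^n ω_k, and β = Σ_{k=1}^n β_k; assume β_j > 0 for all j. Let r = ⌊n/2⌋. Over all pairs (θ,s) with θ ∈ {0,1}, s ∈ ℕ^n and θ + Σ_k s_k = p, the quantity E_{θ,s} = βθ + Σ_k β_k s_k attains its minimum value p·β_r. Moreover, if n is even the minimum is attained exactly at the single pair θ = 0, s_j = p·δ_{j,r}, while if n is odd it is attained at exactly p+1 pairs, namely θ = 0 and s_r + s_{r+1} = p with s_j = 0 for j ∉ {r, r+1}. -/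
noncomputable section

lemma sin_as_cos (n j : ℕ) (hn : 0 < n) :
    Real.sin (Real.pi * j / n) = Real.cos (Real.pi * |((n:ℝ) - 2*j)| / (2*n)) := by
  have hn' : (0:ℝ) < n := by exact_mod_cast hn
  rw [← Real.cos_pi_div_two_sub]
  rw [show Real.pi * |((n:ℝ) - 2*j)| / (2*n) = |Real.pi * ((n:ℝ) - 2*j) / (2*n)| by
    rw [abs_div, abs_mul, abs_of_nonneg Real.pi_pos.le,
      abs_of_nonneg (by positivity : (0:ℝ) ≤ 2*n)]]
  rw [Real.cos_abs]
  congr 1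
  field_simp

lemma arg_mem (n j : ℕ) (hn : 0 < n) (hj : j ≤ n) :
    Real.pi * |((n:ℝ) - 2*j)| / (2*n) ∈ Set.Icc 0 Real.pi := by
  have hn' : (0:ℝ) < n := by exact_mod_cast hn
  constructor
  · positivity
  · have h1 : |((n:ℝ) - 2*j)| ≤ 2*n := by
      rw [abs_le]
      constructor <;> [skip; skip] <;> push_cast <;> nlinarith [(by exact_mod_cast hj : (j:ℝ) ≤ n)]
    calc Real.pi * |((n:ℝ) - 2*j)| / (2*n) ≤ Real.pi * (2*n) / (2*n) := by
          apply div_le_div_of_nonneg_right ?_ (by positivity)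
          · exact mul_le_mul_of_nonneg_left h1 Real.pi_pos.le
      _ = Real.pi := by field_simp

lemma sin_lt_sin (n j k : ℕ) (hn : 0 < n) (hj : j ≤ n) (hk : k ≤ n)
    (h : ((n:ℤ) - 2*k).natAbs < ((n:ℤ) - 2*j).natAbs) :
    Real.sin (Real.pi * j / n) < Real.sin (Real.pi * k / n) := by
  rw [sin_as_cos n j hn, sin_as_cos n k hn]
  have hn' : (0:ℝ) < n := by exact_mod_cast hn
  apply Real.strictAntiOn_cos (arg_mem n k hn hk) (arg_mem n j hn hj)
  have habs : ∀ m : ℕ, |((n:ℝ) - 2*m)| = (((n:ℤ) - 2*m).natAbs : ℝ) := by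
    intro m
    rw [Nat.cast_natAbs]
    push_cast
    congr 1
  rw [habs, habs]
  have : ((((n:ℤ) - 2*k).natAbs : ℝ)) < (((n:ℤ) - 2*j).natAbs : ℝ) := by exact_mod_cast h
  gcongr


lemma sin_nonneg' (n j : ℕ) (hn : 0 < n) (hj : j ≤ n) :
    0 ≤ Real.sin (Real.pi * j / n) := by
  have hn' : (0:ℝ) < n := by exact_mod_cast hn
  have hj' : (j:ℝ) ≤ n := by exact_mod_cast hj
  apply Real.sin_nonneg_of_nonneg_of_le_pi (by positivity)
  rw [div_le_iff₀ hn']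
  nlinarith [Real.pi_pos]

lemma sin_eq_sin (n j k : ℕ) (hn : 0 < n)
    (h : ((n:ℤ) - 2*k).natAbs = ((n:ℤ) - 2*j).natAbs) :
    Real.sin (Real.pi * j / n) = Real.sin (Real.pi * k / n) := by
  rw [sin_as_cos n j hn, sin_as_cos n k hn]
  have habs : ∀ m : ℕ, |((n:ℝ) - 2*m)| = (((n:ℤ) - 2*m).natAbs : ℝ) := by
    intro m
    rw [Nat.cast_natAbs]
    push_cast
    congr 1
  rw [habs, habs, h]

section Beta

variable (n : ℕ) (ω c : ℝ) (ωf β : ℕ → ℝ)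

lemma omega_lt_omega (hn : 0 < n) (hc : 0 < c)
    (hωf : ∀ j, ωf j = Real.sqrt (ω ^ 2 + 4 * c * Real.sin (Real.pi * j / n) ^ 2))
    (j k : ℕ) (hj : j ≤ n) (hk : k ≤ n)
    (h : ((n:ℤ) - 2*k).natAbs < ((n:ℤ) - 2*j).natAbs) : ωf j < ωf k := by
  rw [hωf, hωf]
  apply Real.sqrt_lt_sqrt (by positivity)
  have h1 := sin_lt_sin n j k hn hj hk h
  have h2 := sin_nonneg' n j hn hj
  have h3 := pow_lt_pow_left₀ h1 h2 (two_ne_zero)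
  nlinarith

lemma beta_lt_beta (hn : 0 < n) (hc : 0 < c)
    (hωf : ∀ j, ωf j = Real.sqrt (ω ^ 2 + 4 * c * Real.sin (Real.pi * j / n) ^ 2))
    (hβ : ∀ j, β j = -ωf j + (1 / ((n : ℝ) - 1)) * ∑ k ∈ Finset.Icc 1 n, ωf k)
    (j k : ℕ) (hj : j ≤ n) (hk : k ≤ n)
    (h : ((n:ℤ) - 2*k).natAbs < ((n:ℤ) - 2*j).natAbs) : β k < β j := by
  rw [hβ, hβ]
  have := omega_lt_omega n ω c ωf hn hc hωf j k hj hk h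
  linarith

lemma beta_eq_beta (hn : 0 < n)
    (hωf : ∀ j, ωf j = Real.sqrt (ω ^ 2 + 4 * c * Real.sin (Real.pi * j / n) ^ 2))
    (hβ : ∀ j, β j = -ωf j + (1 / ((n : ℝ) - 1)) * ∑ k ∈ Finset.Icc 1 n, ωf k)
    (j k : ℕ) (h : ((n:ℤ) - 2*k).natAbs = ((n:ℤ) - 2*j).natAbs) : β k = β j := by
  rw [hβ, hβ, hωf, hωf, sin_eq_sin n j k hn h]

end Beta

/-- Minimum energy of the periodic chain in the ladder representation `V(p)`: with
`r = ⌊n/2⌋`, the energy `E_{θ,s}` attains its minimum `p β_r`; for `n` even the minimum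
is attained exactly at `θ = 0`, `s = p δ_r`, while for `n` odd it is attained exactly at
the `p+1` states `θ = 0`, `s_r + s_{r+1} = p`, `s_j = 0` otherwise. -/
theorem min_energy_periodic
    (n p : ℕ) (hn : 2 ≤ n) (hp : 1 ≤ p) (ω c : ℝ) (hω : 0 < ω) (hc : 0 < c)
    (ωf β : ℕ → ℝ)
    (hωf : ∀ j, ωf j = Real.sqrt (ω ^ 2 + 4 * c * Real.sin (Real.pi * j / n) ^ 2))
    (hβ : ∀ j, β j = -ωf j + (1 / ((n : ℝ) - 1)) * ∑ k ∈ Finset.Icc 1 n, ωf k)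
    (hβpos : ∀ j ∈ Finset.Icc 1 n, 0 < β j)
    (βtot : ℝ) (hβtot : βtot = ∑ k ∈ Finset.Icc 1 n, β k)
    (E : ℕ → (ℕ → ℕ) → ℝ)
    (hE : ∀ θ s, E θ s = βtot * θ + ∑ k ∈ Finset.Icc 1 n, β k * s k) :
    (∀ (θ : ℕ) (s : ℕ → ℕ), θ ≤ 1 → (∀ k, k ∉ Finset.Icc 1 n → s k = 0) →
      θ + ∑ k ∈ Finset.Icc 1 n, s k = p →
      (p : ℝ) * β (n / 2) ≤ E θ s) ∧
    (Even n → ∀ (θ : ℕ) (s : ℕ → ℕ), θ ≤ 1 → (∀ k, k ∉ Finset.Icc 1 n → s k = 0) →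
      θ + ∑ k ∈ Finset.Icc 1 n, s k = p →
      (E θ s = (p : ℝ) * β (n / 2) ↔
        (θ = 0 ∧ ∀ k, s k = if k = n / 2 then p else 0))) ∧
    (Odd n → ∀ (θ : ℕ) (s : ℕ → ℕ), θ ≤ 1 → (∀ k, k ∉ Finset.Icc 1 n → s k = 0) →
      θ + ∑ k ∈ Finset.Icc 1 n, s k = p →
      (E θ s = (p : ℝ) * β (n / 2) ↔
        (θ = 0 ∧ s (n / 2) + s (n / 2 + 1) = p ∧
          ∀ k, k ≠ n / 2 → k ≠ n / 2 + 1 → s k = 0))) ∧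
    (Odd n → Set.ncard {x : ℕ × (ℕ → ℕ) | x.1 ≤ 1 ∧
        (∀ k, k ∉ Finset.Icc 1 n → x.2 k = 0) ∧
        x.1 + ∑ k ∈ Finset.Icc 1 n, x.2 k = p ∧
        E x.1 x.2 = (p : ℝ) * β (n / 2)} = p + 1) := by
  have hn0 : 0 < n := by omega
  set r := n / 2 with hr
  have hrmem : r ∈ Finset.Icc 1 n := by rw [Finset.mem_Icc]; omega
  have hr1mem' : Odd n → r + 1 ∈ Finset.Icc 1 n := by
    intro ho; have := Nat.odd_iff.mp ho; rw [Finset.mem_Icc]; omega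
  -- β r is the minimum on Icc 1 n
  have hkey : ∀ j ∈ Finset.Icc 1 n, β r ≤ β j := by
    intro j hjmem
    rw [Finset.mem_Icc] at hjmem
    have hdle : ((n:ℤ) - 2*r).natAbs ≤ ((n:ℤ) - 2*j).natAbs := by omega
    rcases eq_or_lt_of_le hdle with h | h
    · exact (beta_eq_beta n ω c ωf β hn0 hωf hβ j r h).le
    · exact (beta_lt_beta n ω c ωf β hn0 hc hωf hβ j r hjmem.2 (by omega) h).le
  have hstrict : ∀ j, 1 ≤ j → j ≤ n → j ≠ r → ¬(n % 2 = 1 ∧ j = r + 1) → β r < β j := by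
    intro j h1 h2 h3 h4
    exact beta_lt_beta n ω c ωf β hn0 hc hωf hβ j r h2 (by omega) (by omega)
  have hβtotgt : β r < βtot := by
    rw [hβtot, ← Finset.add_sum_erase _ β hrmem]
    have hne : ((Finset.Icc 1 n).erase r).Nonempty := by
      apply Finset.card_pos.mp
      rw [Finset.card_erase_of_mem hrmem, Nat.card_Icc]
      omega
    have : 0 < ∑ k ∈ (Finset.Icc 1 n).erase r, β k :=
      Finset.sum_pos (fun i hi => hβpos i (Finset.mem_of_mem_erase hi)) hne
    linarith
  -- decomposition
  have hdec : ∀ (θ : ℕ) (s : ℕ → ℕ), θ + ∑ k ∈ Finset.Icc 1 n, s k = p →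
      E θ s = (p:ℝ) * β r
        + ((βtot - β r) * θ + ∑ k ∈ Finset.Icc 1 n, (β k - β r) * (s k : ℝ)) := by
    intro θ s hsum
    have hp' : (p:ℝ) = (θ:ℝ) + ∑ k ∈ Finset.Icc 1 n, (s k : ℝ) := by
      rw [← hsum]; push_cast; ring
    have hsplit : ∑ k ∈ Finset.Icc 1 n, (β k - β r) * (s k:ℝ)
        = (∑ k ∈ Finset.Icc 1 n, β k * (s k:ℝ)) - β r * ∑ k ∈ Finset.Icc 1 n, (s k:ℝ) := by
      rw [Finset.mul_sum, ← Finset.sum_sub_distrib]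
      exact Finset.sum_congr rfl fun x _ => by ring
    rw [hE, hp', hsplit]; ring
  have hterm_nn : ∀ (s : ℕ → ℕ) (k : ℕ), k ∈ Finset.Icc 1 n → 0 ≤ (β k - β r) * (s k : ℝ) := by
    intro s k hk
    exact mul_nonneg (by linarith [hkey k hk]) (Nat.cast_nonneg _)
  -- equality characterization
  have hEeq : ∀ (θ : ℕ) (s : ℕ → ℕ), θ + ∑ k ∈ Finset.Icc 1 n, s k = p →
      (E θ s = (p:ℝ) * β r ↔ (θ = 0 ∧ ∀ k ∈ Finset.Icc 1 n, β r < β k → s k = 0)) := by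
    intro θ s hsum
    rw [hdec θ s hsum, add_eq_left]
    have h1 : 0 ≤ (βtot - β r) * (θ:ℝ) := mul_nonneg (by linarith) (Nat.cast_nonneg _)
    have h2 : 0 ≤ ∑ k ∈ Finset.Icc 1 n, (β k - β r) * (s k:ℝ) :=
      Finset.sum_nonneg (hterm_nn s)
    constructor
    · intro h
      have hθ0 : (βtot - β r) * (θ:ℝ) = 0 := by linarith
      have hsum0 : ∑ k ∈ Finset.Icc 1 n, (β k - β r) * (s k:ℝ) = 0 := by linarith
      constructor
      · rcases mul_eq_zero.mp hθ0 with h' | h'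
        · exfalso; linarith
        · exact_mod_cast h'
      · intro k hk hlt
        have := (Finset.sum_eq_zero_iff_of_nonneg (hterm_nn s)).mp hsum0 k hk
        rcases mul_eq_zero.mp this with h' | h'
        · exfalso; linarith
        · exact_mod_cast h'
    · rintro ⟨hθ0, hsk⟩
      subst hθ0
      have : ∑ k ∈ Finset.Icc 1 n, (β k - β r) * (s k:ℝ) = 0 := by
        apply Finset.sum_eq_zero
        intro k hk
        rcases eq_or_lt_of_le (hkey k hk) with h' | h'
        · rw [← h']; ring
        · rw [hsk k hk h']; norm_num
      rw [this]; norm_num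
  -- part 1
  have part1 : ∀ (θ : ℕ) (s : ℕ → ℕ), θ ≤ 1 → (∀ k, k ∉ Finset.Icc 1 n → s k = 0) →
      θ + ∑ k ∈ Finset.Icc 1 n, s k = p → (p : ℝ) * β r ≤ E θ s := by
    intro θ s hθ hs0 hsum
    rw [hdec θ s hsum]
    have h1 : 0 ≤ (βtot - β r) * (θ:ℝ) := mul_nonneg (by linarith) (Nat.cast_nonneg _)
    have h2 : 0 ≤ ∑ k ∈ Finset.Icc 1 n, (β k - β r) * (s k:ℝ) :=
      Finset.sum_nonneg (hterm_nn s)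
    linarith
  -- part 2 : even
  have part2 : Even n → ∀ (θ : ℕ) (s : ℕ → ℕ), θ ≤ 1 →
      (∀ k, k ∉ Finset.Icc 1 n → s k = 0) →
      θ + ∑ k ∈ Finset.Icc 1 n, s k = p →
      (E θ s = (p : ℝ) * β r ↔ (θ = 0 ∧ ∀ k, s k = if k = r then p else 0)) := by
    intro hev θ s hθ hs0 hsum
    have hne : n % 2 = 0 := Nat.even_iff.mp hev
    rw [hEeq θ s hsum]
    constructor
    · rintro ⟨hθ0, h2⟩
      have hz : ∀ k, k ≠ r → s k = 0 := by
        intro k hk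
        by_cases hkI : k ∈ Finset.Icc 1 n
        · rw [Finset.mem_Icc] at hkI
          exact h2 k (Finset.mem_Icc.mpr hkI)
            (hstrict k hkI.1 hkI.2 hk (by omega))
        · exact hs0 k hkI
      have hsr : s r = p := by
        have h3 : ∑ k ∈ Finset.Icc 1 n, s k = s r :=
          Finset.sum_eq_single_of_mem r hrmem (fun b _ hb => hz b hb)
        omega
      refine ⟨hθ0, fun k => ?_⟩
      by_cases hk : k = r
      · simp [hk, hsr]
      · simp [hk, hz k hk]
    · rintro ⟨hθ0, hall⟩
      refine ⟨hθ0, fun k hk hlt => ?_⟩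
      have hkr : k ≠ r := by rintro rfl; exact lt_irrefl _ hlt
      simp [hall k, hkr]
  -- part 3 : odd
  have part3 : Odd n → ∀ (θ : ℕ) (s : ℕ → ℕ), θ ≤ 1 →
      (∀ k, k ∉ Finset.Icc 1 n → s k = 0) →
      θ + ∑ k ∈ Finset.Icc 1 n, s k = p →
      (E θ s = (p : ℝ) * β r ↔
        (θ = 0 ∧ s r + s (r + 1) = p ∧ ∀ k, k ≠ r → k ≠ r + 1 → s k = 0)) := by
    intro hodd θ s hθ hs0 hsum
    have ho : n % 2 = 1 := Nat.odd_iff.mp hodd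
    have hβr1 : β (r + 1) = β r := by
      apply beta_eq_beta n ω c ωf β hn0 hωf hβ r (r+1)
      omega
    have hpairsub : ({r, r+1} : Finset ℕ) ⊆ Finset.Icc 1 n := by
      intro x hx
      simp only [Finset.mem_insert, Finset.mem_singleton] at hx
      rw [Finset.mem_Icc]
      omega
    rw [hEeq θ s hsum]
    constructor
    · rintro ⟨hθ0, h2⟩
      have hz : ∀ k, k ≠ r → k ≠ r + 1 → s k = 0 := by
        intro k hk1 hk2
        by_cases hkI : k ∈ Finset.Icc 1 n
        · rw [Finset.mem_Icc] at hkI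
          exact h2 k (Finset.mem_Icc.mpr hkI)
            (hstrict k hkI.1 hkI.2 hk1 (by omega))
        · exact hs0 k hkI
      have h3 : ∑ k ∈ Finset.Icc 1 n, s k = s r + s (r+1) := by
        rw [← Finset.sum_subset hpairsub (fun x _ hxp => by
          simp only [Finset.mem_insert, Finset.mem_singleton] at hxp
          push_neg at hxp
          exact hz x hxp.1 hxp.2)]
        rw [Finset.sum_pair (by omega : r ≠ r + 1)]
      exact ⟨hθ0, by omega, hz⟩
    · rintro ⟨hθ0, hp2, hz⟩
      refine ⟨hθ0, fun k hk hlt => ?_⟩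
      apply hz k
      · rintro rfl; exact lt_irrefl _ hlt
      · rintro rfl; rw [hβr1] at hlt; exact lt_irrefl _ hlt
  refine ⟨part1, part2, part3, ?_⟩
  -- part 4 : cardinality
  intro hodd
  have ho : n % 2 = 1 := Nat.odd_iff.mp hodd
  set f : ℕ → ℕ × (ℕ → ℕ) :=
    fun i => (0, fun k => if k = r then i else if k = r + 1 then p - i else 0) with hf
  have hrne : r ≠ r + 1 := by omega
  have hpairsub : ({r, r+1} : Finset ℕ) ⊆ Finset.Icc 1 n := by
    intro x hx
    simp only [Finset.mem_insert, Finset.mem_singleton] at hx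
    rw [Finset.mem_Icc]
    omega
  have hSet : {x : ℕ × (ℕ → ℕ) | x.1 ≤ 1 ∧
      (∀ k, k ∉ Finset.Icc 1 n → x.2 k = 0) ∧
      x.1 + ∑ k ∈ Finset.Icc 1 n, x.2 k = p ∧
      E x.1 x.2 = (p : ℝ) * β r} = f '' Set.Iic p := by
    ext x
    simp only [Set.mem_setOf_eq, Set.mem_image, Set.mem_Iic]
    constructor
    · rintro ⟨hx1, hx2, hx3, hx4⟩
      obtain ⟨hθ0, hp2, hz⟩ := (part3 hodd x.1 x.2 hx1 hx2 hx3).mp hx4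
      refine ⟨x.2 r, by omega, ?_⟩
      rw [hf]
      apply Prod.ext
      · exact hθ0.symm
      · funext k
        by_cases hk1 : k = r
        · simp [hk1]
        · by_cases hk2 : k = r + 1
          · subst hk2
            simp only [if_neg hk1, if_pos rfl, if_true]
            omega
          · simp only [if_neg hk1, if_neg hk2]
            exact (hz k hk1 hk2).symm
    · rintro ⟨i, hip, rfl⟩
      have hsupp : ∀ k, k ∉ Finset.Icc 1 n → (f i).2 k = 0 := by
        intro k hk
        have h1 : k ≠ r := by rintro rfl; exact hk hrmem
        have h2 : k ≠ r + 1 := by rintro rfl; exact hk (hpairsub (by simp))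
        simp [hf, h1, h2]
      have hsum : (f i).1 + ∑ k ∈ Finset.Icc 1 n, (f i).2 k = p := by
        have h3 : ∑ k ∈ Finset.Icc 1 n, (f i).2 k
            = ∑ k ∈ ({r, r+1} : Finset ℕ), (f i).2 k := by
          rw [Finset.sum_subset hpairsub (fun x _ hxp => by
            simp only [Finset.mem_insert, Finset.mem_singleton] at hxp
            push_neg at hxp
            simp [hf, hxp.1, hxp.2])]
        rw [h3, Finset.sum_pair hrne]
        simp [hf, hrne.symm]
        omega
      refine ⟨by simp [hf], hsupp, hsum, ?_⟩
      apply (part3 hodd (f i).1 (f i).2 (by simp [hf]) hsupp hsum).mpr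
      refine ⟨by simp [hf], ?_, ?_⟩
      · simp [hf, hrne.symm]
        omega
      · intro k hk1 hk2
        simp [hf, hk1, hk2]
  rw [hSet]
  have hinj : Set.InjOn f (Set.Iic p) := by
    intro a _ b _ hab
    have := congrArg (fun x => x.2 r) hab
    simpa [hf] using this
  rw [Set.ncard_image_of_injOn hinj,
    show (Set.Iic p) = ((Finset.Iic p : Finset ℕ) : Set ℕ) from (Finset.coe_Iic p).symm,
    Set.ncard_coe_finset, Nat.card_Iic]

end
end

section
/- Let n ≥ 2 and p ≥ 1 be integers, ω > 0 and c > 0 real, and set ω̃_j = sqrt(ω² + 4c·sin²(jπ/(2(n+1)))), β̃_j = −ω̃_j + (1/(n−1))·Σ_{k=1}^n ω̃_k, and β̃ = Σ_{k=1}^n β̃_k; assume β̃_j > 0 for all j. Over all pairs (θ,s) with θ ∈ {0,1}, s ∈ ℕ^n and θ + Σ_k s_k = p, the quantity Ẽ_{θ,s} = β̃θ + Σ_k β̃_k s_k attains its maximum value β̃ + (p−1)β̃_1 exactly at the single pair θ = 1, s = (p−1,0,…,0), and attains its minimum value p·β̃_n exactly at the single pair θ = 0, s = (0,…,0,p). In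 particular both extremal energy levels are nondegenerate. -/
noncomputable section

theorem aux_anti
    (n : ℕ) (hn : 2 ≤ n) (ω c : ℝ) (hω : 0 < ω) (hc : 0 < c)
    (ωt βt : ℕ → ℝ)
    (hωt : ∀ j, ωt j = Real.sqrt (ω ^ 2 + 4 * c * Real.sin (j * Real.pi / (2 * (n + 1))) ^ 2))
    (hβt : ∀ j, βt j = -ωt j + (1 / ((n : ℝ) - 1)) * ∑ k ∈ Finset.Icc 1 n, ωt k) :
    ∀ i ∈ Finset.Icc 1 n, ∀ j ∈ Finset.Icc 1 n, i < j → βt j < βt i := by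
  intro i hi j hj hij
  rw [Finset.mem_Icc] at hi hj
  have hden : (0:ℝ) < 2 * ((n:ℝ) + 1) := by positivity
  have hrange : ∀ m : ℕ, 1 ≤ m → m ≤ n →
      (m:ℝ) * Real.pi / (2 * ((n:ℝ) + 1)) ∈ Set.Icc (-(Real.pi/2)) (Real.pi/2) := by
    intro m hm1 hmn
    have hm : (1:ℝ) ≤ (m:ℝ) := by exact_mod_cast hm1
    have hm' : (m:ℝ) ≤ (n:ℝ) + 1 := by
      have : (m:ℝ) ≤ (n:ℝ) := by exact_mod_cast hmn
      linarith
    constructor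
    · have : 0 ≤ (m:ℝ) * Real.pi / (2 * ((n:ℝ) + 1)) := by positivity
      have := Real.pi_pos
      linarith
    · rw [div_le_div_iff₀ hden (by norm_num : (0:ℝ) < 2)]
      nlinarith [Real.pi_pos]
  have hangle : (i:ℝ) * Real.pi / (2 * ((n:ℝ) + 1)) < (j:ℝ) * Real.pi / (2 * ((n:ℝ) + 1)) := by
    have : (i:ℝ) < (j:ℝ) := by exact_mod_cast hij
    have := Real.pi_pos
    gcongr
  have hsin : Real.sin ((i:ℝ) * Real.pi / (2 * ((n:ℝ) + 1))) <
      Real.sin ((j:ℝ) * Real.pi / (2 * ((n:ℝ) + 1))) :=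
    Real.strictMonoOn_sin (hrange i hi.1 hi.2) (hrange j hj.1 hj.2) hangle
  have hsin0 : 0 ≤ Real.sin ((i:ℝ) * Real.pi / (2 * ((n:ℝ) + 1))) := by
    apply Real.sin_nonneg_of_nonneg_of_le_pi
    · positivity
    · have := (hrange i hi.1 hi.2).2
      have := Real.pi_pos
      linarith
  have hω' : ωt i < ωt j := by
    rw [hωt, hωt]
    apply Real.sqrt_lt_sqrt (by positivity)
    have : Real.sin ((i:ℝ) * Real.pi / (2 * ((n:ℝ) + 1))) ^ 2 <
        Real.sin ((j:ℝ) * Real.pi / (2 * ((n:ℝ) + 1))) ^ 2 := by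
      apply pow_lt_pow_left₀ hsin hsin0
      norm_num
    nlinarith
  rw [hβt, hβt]
  linarith

/-- Extremal energies of the fixed wall chain in the ladder representation `V(p)`: the
energy `Ẽ_{θ,s} = β̃θ + ∑_k β̃_k s_k` attains its maximum `β̃ + (p-1)β̃_1` exactly at
`θ = 1`, `s = (p-1,0,…,0)`, and its minimum `p β̃_n` exactly at `θ = 0`,
`s = (0,…,0,p)`; both extremal levels are nondegenerate. -/
theorem extremal_energies_fixed_wall_nondegenerate
    (n p : ℕ) (hn : 2 ≤ n) (hp : 1 ≤ p) (ω c : ℝ) (hω : 0 < ω) (hc : 0 < c)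
    (ωt βt : ℕ → ℝ)
    (hωt : ∀ j, ωt j = Real.sqrt (ω ^ 2 + 4 * c * Real.sin (j * Real.pi / (2 * (n + 1))) ^ 2))
    (hβt : ∀ j, βt j = -ωt j + (1 / ((n : ℝ) - 1)) * ∑ k ∈ Finset.Icc 1 n, ωt k)
    (hβpos : ∀ j ∈ Finset.Icc 1 n, 0 < βt j)
    (βtot : ℝ) (hβtot : βtot = ∑ k ∈ Finset.Icc 1 n, βt k)
    (E : ℕ → (ℕ → ℕ) → ℝ)
    (hE : ∀ θ s, E θ s = βtot * θ + ∑ k ∈ Finset.Icc 1 n, βt k * s k) :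
    ∀ (θ : ℕ) (s : ℕ → ℕ), θ ≤ 1 → (∀ k, k ∉ Finset.Icc 1 n → s k = 0) →
      θ + ∑ k ∈ Finset.Icc 1 n, s k = p →
      (E θ s ≤ βtot + ((p : ℝ) - 1) * βt 1 ∧
       (E θ s = βtot + ((p : ℝ) - 1) * βt 1 ↔
         (θ = 1 ∧ ∀ k, s k = if k = 1 then p - 1 else 0)) ∧
       (p : ℝ) * βt n ≤ E θ s ∧
       (E θ s = (p : ℝ) * βt n ↔
         (θ = 0 ∧ ∀ k, s k = if k = n then p else 0))) := by
  intro θ s hθ hsupp hsum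
  have hanti := aux_anti n hn ω c hω hc ωt βt hωt hβt
  have h1n : 1 ∈ Finset.Icc 1 n := by simp; omega
  have hnn : n ∈ Finset.Icc 1 n := by simp; omega
  have h2n : 2 ∈ Finset.Icc 1 n := by simp; omega
  have hβ1 := hβpos 1 h1n
  have hβn := hβpos n hnn
  -- βt 1 is the max, βt n the min, strictly
  have hmax : ∀ k ∈ Finset.Icc 1 n, k ≠ 1 → βt k < βt 1 := by
    intro k hk hk1
    have : 1 < k := by
      rw [Finset.mem_Icc] at hk; omega
    exact hanti 1 h1n k hk this
  have hmin : ∀ k ∈ Finset.Icc 1 n, k ≠ n → βt n < βt k := by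
    intro k hk hkn
    have : k < n := by
      rw [Finset.mem_Icc] at hk; omega
    exact hanti k hk n hnn this
  -- βt 1 < βtot and βt n < βtot
  have hβtot1 : βt 1 < βtot := by
    rw [hβtot]
    refine Finset.single_lt_sum (i := 1) (j := 2) (by omega) h1n h2n (hβpos 2 h2n) ?_
    intro k hk _
    exact (hβpos k hk).le
  have hβtotn : βt n < βtot := by
    rw [hβtot]
    refine Finset.single_lt_sum (i := n) (j := 1) (by omega) hnn h1n hβ1 ?_
    intro k hk _
    exact (hβpos k hk).le
  interval_cases θ
  · -- θ = 0
    simp only [Nat.zero_add] at hsum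
    have hsum' : ∑ k ∈ Finset.Icc 1 n, (s k : ℝ) = (p : ℝ) := by
      exact_mod_cast congrArg (Nat.cast (R := ℝ)) hsum
    have hE0 : E 0 s = ∑ k ∈ Finset.Icc 1 n, βt k * s k := by
      rw [hE]; push_cast; ring
    have hub : E 0 s ≤ βt 1 * p := by
      rw [hE0, ← hsum', Finset.mul_sum]
      refine Finset.sum_le_sum ?_
      intro k hk
      by_cases hk1 : k = 1
      · subst hk1; exact le_rfl
      · exact mul_le_mul_of_nonneg_right (hmax k hk hk1).le (by positivity)
    have hlb : βt n * p ≤ E 0 s := by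
      rw [hE0, ← hsum', Finset.mul_sum]
      refine Finset.sum_le_sum ?_
      intro k hk
      by_cases hkn : k = n
      · subst hkn; exact le_rfl
      · exact mul_le_mul_of_nonneg_right (hmin k hk hkn).le (by positivity)
    have hpR : (1:ℝ) ≤ p := by exact_mod_cast hp
    refine ⟨?_, ?_, by linarith, ?_⟩
    · nlinarith
    · constructor
      · intro h; exfalso; nlinarith
      · rintro ⟨h, -⟩; omega
    · constructor
      · intro h
        refine ⟨rfl, ?_⟩
        -- equality forces s k = 0 for k ≠ n in Icc
        have hzero : ∀ k ∈ Finset.Icc 1 n, (βt k - βt n) * s k = 0 := by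
          have hsum0 : ∑ k ∈ Finset.Icc 1 n, (βt k - βt n) * s k = 0 := by
            have hA : ∑ k ∈ Finset.Icc 1 n, βt k * s k = βt n * (p : ℝ) := by
              rw [← hE0, h]; ring
            have hB : ∑ k ∈ Finset.Icc 1 n, βt n * (s k : ℝ) = βt n * (p : ℝ) := by
              rw [← Finset.mul_sum, hsum']
            calc ∑ k ∈ Finset.Icc 1 n, (βt k - βt n) * s k
                = ∑ k ∈ Finset.Icc 1 n, (βt k * s k - βt n * s k) := by
                  refine Finset.sum_congr rfl ?_; intro k _; ring
              _ = 0 := by rw [Finset.sum_sub_distrib, hA, hB]; ring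
          rw [Finset.sum_eq_zero_iff_of_nonneg] at hsum0
          · exact hsum0
          · intro k hk
            by_cases hkn : k = n
            · subst hkn; simp
            · have := (hmin k hk hkn)
              exact mul_nonneg (by linarith) (by positivity)
        have hz : ∀ k ∈ Finset.Icc 1 n, k ≠ n → s k = 0 := by
          intro k hk hkn
          have h0 := hzero k hk
          have hpos := hmin k hk hkn
          have : (s k : ℝ) = 0 := by
            rcases mul_eq_zero.mp h0 with h' | h'
            · linarith
            · exact h'
          exact_mod_cast this
        have hsn : s n = p := by
          rw [← hsum, Finset.sum_eq_single_of_mem n hnn]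
          intro b hb hbn
          exact hz b hb hbn
        intro k
        by_cases hkn : k = n
        · subst hkn; simp [hsn]
        · simp only [hkn, if_false]
          by_cases hk : k ∈ Finset.Icc 1 n
          · exact hz k hk hkn
          · exact hsupp k hk
      · rintro ⟨-, hs⟩
        rw [hE0, Finset.sum_eq_single_of_mem n hnn]
        · rw [hs n]; simp [mul_comm]
        · intro b hb hbn
          rw [hs b]; simp [hbn]
  · -- θ = 1
    have hsum1 : ∑ k ∈ Finset.Icc 1 n, s k = p - 1 := by omega
    have hsum' : ∑ k ∈ Finset.Icc 1 n, (s k : ℝ) = (p : ℝ) - 1 := by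
      have : ((∑ k ∈ Finset.Icc 1 n, s k : ℕ) : ℝ) = ((p - 1 : ℕ) : ℝ) := by
        exact_mod_cast congrArg (Nat.cast (R := ℝ)) hsum1
      push_cast [Nat.cast_sub hp] at this
      exact_mod_cast this
    have hE1 : E 1 s = βtot + ∑ k ∈ Finset.Icc 1 n, βt k * s k := by
      rw [hE]; push_cast; ring
    have hub : ∑ k ∈ Finset.Icc 1 n, βt k * s k ≤ βt 1 * ((p:ℝ) - 1) := by
      rw [← hsum', Finset.mul_sum]
      refine Finset.sum_le_sum ?_
      intro k hk
      by_cases hk1 : k = 1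
      · subst hk1; exact le_rfl
      · exact mul_le_mul_of_nonneg_right (hmax k hk hk1).le (by positivity)
    have hlbn : βt n * ((p:ℝ) - 1) ≤ ∑ k ∈ Finset.Icc 1 n, βt k * s k := by
      rw [← hsum', Finset.mul_sum]
      refine Finset.sum_le_sum ?_
      intro k hk
      by_cases hkn : k = n
      · subst hkn; exact le_rfl
      · exact mul_le_mul_of_nonneg_right (hmin k hk hkn).le (by positivity)
    have hpR : (1:ℝ) ≤ p := by exact_mod_cast hp
    refine ⟨by rw [hE1]; linarith, ?_, by rw [hE1]; nlinarith, ?_⟩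
    · constructor
      · intro h
        refine ⟨rfl, ?_⟩
        have heq : ∑ k ∈ Finset.Icc 1 n, βt k * s k = βt 1 * ((p:ℝ) - 1) := by
          rw [hE1] at h; linarith
        have hzero : ∀ k ∈ Finset.Icc 1 n, (βt 1 - βt k) * s k = 0 := by
          have hsum0 : ∑ k ∈ Finset.Icc 1 n, (βt 1 - βt k) * s k = 0 := by
            have h2 : ∑ k ∈ Finset.Icc 1 n, βt 1 * (s k : ℝ) = βt 1 * ((p:ℝ) - 1) := by
              rw [← Finset.mul_sum, hsum']
            calc ∑ k ∈ Finset.Icc 1 n, (βt 1 - βt k) * s k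
                = ∑ k ∈ Finset.Icc 1 n, (βt 1 * s k - βt k * s k) := by
                  refine Finset.sum_congr rfl ?_; intro k _; ring
              _ = 0 := by rw [Finset.sum_sub_distrib, h2, heq]; ring
          rw [Finset.sum_eq_zero_iff_of_nonneg] at hsum0
          · exact hsum0
          · intro k hk
            by_cases hk1 : k = 1
            · subst hk1; simp
            · have := hmax k hk hk1
              exact mul_nonneg (by linarith) (by positivity)
        have hz : ∀ k ∈ Finset.Icc 1 n, k ≠ 1 → s k = 0 := by
          intro k hk hk1
          have h0 := hzero k hk
          have hpos := hmax k hk hk1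
          have : (s k : ℝ) = 0 := by
            rcases mul_eq_zero.mp h0 with h' | h'
            · linarith
            · exact h'
          exact_mod_cast this
        have hs1 : s 1 = p - 1 := by
          rw [← hsum1, Finset.sum_eq_single_of_mem 1 h1n]
          intro b hb hb1
          exact hz b hb hb1
        intro k
        by_cases hk1 : k = 1
        · subst hk1; simp [hs1]
        · simp only [hk1, if_false]
          by_cases hk : k ∈ Finset.Icc 1 n
          · exact hz k hk hk1
          · exact hsupp k hk
      · rintro ⟨-, hs⟩
        rw [hE1, Finset.sum_eq_single_of_mem 1 h1n]
        · rw [hs 1]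
          simp only [if_pos rfl]
          push_cast [Nat.cast_sub hp]
          ring
        · intro b hb hb1
          rw [hs b]; simp [hb1]
    · constructor
      · intro h
        exfalso
        rw [hE1] at h
        nlinarith
      · rintro ⟨h, -⟩; omega
end
end

section
/- Let n ≥ 2 be an integer, m, ω, ħ > 0 and c ≥ 0 real, and set ω_j = sqrt(ω² + 4c·sin²(πj/n)), β_j = −ω_j + (1/(n−1))·Σ_{k=1}^n ω_k, assumed positive for all j; put γ_j = sqrt(β_j)/ω_j and γ = Σ_j γ_j². Let V(1) be the (n+1)-dimensional complex inner product space with orthonormal basis consisting of w(1;0,…,0) and w(0;1^j) for j = 1,…,n (where 1^j denotes the n-tuple with 1 in position j and 0 elsewhere), and let the position operator q̂_n act by q̂_n = sqrt(ħ/(mn))·Σ_{j=1}^n γ_j (e_{j0} + e_{0j}), where e_{j0} w(1;0,…,0) = w(0;1^j), e_{j0} w(0;1^k) = 0, e_{0j} w(0;1^k) = δ_{jk}·w(1;0,…,0), and e_{0j} w(1;0,…,0) = 0. Then the vectors ψ_± = (1/√2)·w(1;0,…,0) ± (1/√(2γ))·Σ_{j=1}^n γ_j·w(0;1^j) are unit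 vectors satisfying q̂_n ψ_± = ±sqrt(ħγ/(mn))·ψ_±. Consequently, the position probabilities P(θ,s,n,±x_0) = |⟨w(θ;s), ψ_±⟩|² satisfy P(1,0,n,±x_0) = 1/2 and P(0,1^k,n,±x_0) = γ_k²/(2γ), and hence P(1,0,n,±x_1) = 0 and P(0,1^k,n,±x_1) = (γ − γ_k²)/γ, where x_1 = 0 and P(θ,s,n,±x_1) = 1 − 2P(θ,s,n,x_0). -/
noncomputable section

open scoped InnerProductSpace

/-- Position probabilities for the periodic chain in the ladder representation `V(1)`:
the vectors `ψ_± = (1/√2) w(1;0,…,0) ± (1/√(2γ)) ∑_j γ_j w(0;1^j)` are unit eigenvectors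
of `q̂_n` for the eigenvalues `±x_0 = ±sqrt(ħγ/(mn))`, so `P(1,0,n,±x_0) = 1/2`,
`P(0,1^k,n,±x_0) = γ_k²/(2γ)`, and hence `P(1,0,n,±x_1) = 1 - 2·(1/2) = 0` and
`P(0,1^k,n,±x_1) = 1 - 2·γ_k²/(2γ) = (γ-γ_k²)/γ`, where `x_1 = 0`. -/
theorem position_probabilities_ladder_p_one_periodic
    (n : ℕ) (hn : 2 ≤ n)
    (m ω hbar c : ℝ) (hm : 0 < m) (hω : 0 < ω) (hhbar : 0 < hbar) (hc : 0 ≤ c)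
    (ωf β γf : ℕ → ℝ)
    (hωf : ∀ j, ωf j = Real.sqrt (ω ^ 2 + 4 * c * Real.sin (Real.pi * j / n) ^ 2))
    (hβdef : ∀ j, β j = -ωf j + (1 / ((n : ℝ) - 1)) * ∑ k ∈ Finset.Icc 1 n, ωf k)
    (hβpos : ∀ j ∈ Finset.Icc 1 n, 0 < β j)
    (hγ : ∀ j, γf j = Real.sqrt (β j) / ωf j)
    (γ : ℝ) (hγtot : γ = ∑ j ∈ Finset.Icc 1 n, γf j ^ 2)
    (V : Type*) [NormedAddCommGroup V] [InnerProductSpace ℂ V]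
    (w0 : V) (wv : ℕ → V)
    (hw0 : ⟪w0, w0⟫_ℂ = 1)
    (hw0v : ∀ j ∈ Finset.Icc 1 n, ⟪w0, wv j⟫_ℂ = 0)
    (hvv : ∀ j ∈ Finset.Icc 1 n, ∀ k ∈ Finset.Icc 1 n,
      ⟪wv j, wv k⟫_ℂ = if j = k then 1 else 0)
    (ej0 e0j : ℕ → V →ₗ[ℂ] V)
    (hej0 : ∀ j ∈ Finset.Icc 1 n, ej0 j w0 = wv j ∧ ∀ k ∈ Finset.Icc 1 n, ej0 j (wv k) = 0)
    (he0j : ∀ j ∈ Finset.Icc 1 n, e0j j w0 = 0 ∧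
      ∀ k ∈ Finset.Icc 1 n, e0j j (wv k) = if j = k then w0 else 0)
    (Q : V →ₗ[ℂ] V)
    (hQ : Q = (Real.sqrt (hbar / (m * n)) : ℂ) •
      ∑ j ∈ Finset.Icc 1 n, (γf j : ℂ) • (ej0 j + e0j j))
    (ψp ψm : V)
    (hψp : ψp = ((1 / Real.sqrt 2 : ℝ) : ℂ) • w0 +
      ((1 / Real.sqrt (2 * γ) : ℝ) : ℂ) • ∑ j ∈ Finset.Icc 1 n, (γf j : ℂ) • wv j)
    (hψm : ψm = ((1 / Real.sqrt 2 : ℝ) : ℂ) • w0 -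
      ((1 / Real.sqrt (2 * γ) : ℝ) : ℂ) • ∑ j ∈ Finset.Icc 1 n, (γf j : ℂ) • wv j) :
    ‖ψp‖ = 1 ∧ ‖ψm‖ = 1 ∧
    Q ψp = (Real.sqrt (hbar * γ / (m * n)) : ℂ) • ψp ∧
    Q ψm = -((Real.sqrt (hbar * γ / (m * n)) : ℂ) • ψm) ∧
    ‖⟪w0, ψp⟫_ℂ‖ ^ 2 = 1 / 2 ∧ ‖⟪w0, ψm⟫_ℂ‖ ^ 2 = 1 / 2 ∧
    (∀ k ∈ Finset.Icc 1 n,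
      ‖⟪wv k, ψp⟫_ℂ‖ ^ 2 = γf k ^ 2 / (2 * γ) ∧
      ‖⟪wv k, ψm⟫_ℂ‖ ^ 2 = γf k ^ 2 / (2 * γ)) ∧
    1 - 2 * ‖⟪w0, ψp⟫_ℂ‖ ^ 2 = 0 ∧
    (∀ k ∈ Finset.Icc 1 n,
      1 - 2 * ‖⟪wv k, ψp⟫_ℂ‖ ^ 2 = (γ - γf k ^ 2) / γ) := by
  set S := Finset.Icc 1 n with hSdef
  have hS1 : (1 : ℕ) ∈ S := by simp [hSdef, Finset.mem_Icc]; omega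
  have hωpos : ∀ j, 0 < ωf j := fun j => by
    rw [hωf j]; apply Real.sqrt_pos.mpr; positivity
  have hγfpos : ∀ j ∈ S, 0 < γf j := fun j hj => by
    rw [hγ j]; exact div_pos (Real.sqrt_pos.mpr (hβpos j hj)) (hωpos j)
  have hγpos : 0 < γ := by
    rw [hγtot]
    exact Finset.sum_pos (fun j hj => pow_pos (hγfpos j hj) 2) ⟨1, hS1⟩
  have hγne : γ ≠ 0 := ne_of_gt hγpos
  have hs2 : Real.sqrt 2 ≠ 0 := by positivity
  have hsγpos : 0 < Real.sqrt γ := Real.sqrt_pos.mpr hγpos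
  have hsγ : Real.sqrt γ ≠ 0 := ne_of_gt hsγpos
  have hγsq : Real.sqrt γ * Real.sqrt γ = γ := Real.mul_self_sqrt hγpos.le
  have hb2 : Real.sqrt (2 * γ) = Real.sqrt 2 * Real.sqrt γ := Real.sqrt_mul (by norm_num) γ
  have hlam : Real.sqrt (hbar * γ / (m * n)) = Real.sqrt γ * Real.sqrt (hbar / (m * n)) := by
    rw [show hbar * γ / (m * n) = γ * (hbar / (m * n)) by ring, Real.sqrt_mul hγpos.le]
  -- abbreviations
  set ra : ℝ := 1 / Real.sqrt 2 with hra
  set rb : ℝ := 1 / Real.sqrt (2 * γ) with hrb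
  set rs : ℝ := Real.sqrt (hbar / (m * n)) with hrs
  set rlam : ℝ := Real.sqrt (hbar * γ / (m * n)) with hrlam
  have hra2 : ra ^ 2 = 1 / 2 := by
    rw [hra, div_pow, one_pow, Real.sq_sqrt (by norm_num : (0:ℝ) ≤ 2)]
  have hrb2 : rb ^ 2 = 1 / (2 * γ) := by
    rw [hrb, div_pow, one_pow, Real.sq_sqrt (by positivity)]
  have hranneg : 0 ≤ ra := by positivity
  have hrbnneg : 0 ≤ rb := by positivity
  -- vector u
  set u : V := ∑ j ∈ S, (γf j : ℂ) • wv j with hu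
  have h0u : ⟪w0, u⟫_ℂ = 0 := by
    rw [hu, inner_sum]
    exact Finset.sum_eq_zero fun j hj => by rw [inner_smul_right, hw0v j hj, mul_zero]
  have hvw0 : ∀ k ∈ S, ⟪wv k, w0⟫_ℂ = 0 := fun k hk => by
    rw [← inner_conj_symm, hw0v k hk, map_zero]
  have hu0 : ⟪u, w0⟫_ℂ = 0 := by
    rw [← inner_conj_symm, h0u, map_zero]
  have hku : ∀ k ∈ S, ⟪wv k, u⟫_ℂ = (γf k : ℂ) := by
    intro k hk
    rw [hu, inner_sum]
    have h1 : ∀ j ∈ S, ⟪wv k, (γf j : ℂ) • wv j⟫_ℂ = if j = k then (γf k : ℂ) else 0 := by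
      intro j hj
      rw [inner_smul_right, hvv k hk j hj]
      by_cases h : k = j
      · subst h; simp
      · rw [if_neg h, if_neg fun hh => h hh.symm, mul_zero]
    rw [Finset.sum_congr rfl h1, Finset.sum_ite_eq' S k (fun _ => (γf k : ℂ)), if_pos hk]
  have huu : ⟪u, u⟫_ℂ = (γ : ℂ) := by
    conv_lhs => rw [hu, sum_inner]
    rw [hγtot]
    push_cast
    refine Finset.sum_congr rfl fun j hj => ?_
    rw [inner_smul_left, hku j hj, Complex.conj_ofReal, sq]
  -- inner products with ψp, ψm
  have hinner0p : ⟪w0, ψp⟫_ℂ = (ra : ℂ) := by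
    rw [hψp, inner_add_right, inner_smul_right, inner_smul_right, hw0, h0u]
    simp
  have hinner0m : ⟪w0, ψm⟫_ℂ = (ra : ℂ) := by
    rw [hψm, inner_sub_right, inner_smul_right, inner_smul_right, hw0, h0u]
    simp
  have hinnerkp : ∀ k ∈ S, ⟪wv k, ψp⟫_ℂ = ((rb * γf k : ℝ) : ℂ) := fun k hk => by
    rw [hψp, inner_add_right, inner_smul_right, inner_smul_right, hvw0 k hk, hku k hk]
    push_cast; ring
  have hinnerkm : ∀ k ∈ S, ⟪wv k, ψm⟫_ℂ = ((-(rb * γf k) : ℝ) : ℂ) := fun k hk => by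
    rw [hψm, inner_sub_right, inner_smul_right, inner_smul_right, hvw0 k hk, hku k hk]
    push_cast; ring
  have hup : ⟪u, ψp⟫_ℂ = (rb : ℂ) * (γ : ℂ) := by
    rw [hψp, inner_add_right, inner_smul_right, inner_smul_right, hu0, huu]
    ring
  have hum : ⟪u, ψm⟫_ℂ = -((rb : ℂ) * (γ : ℂ)) := by
    rw [hψm, inner_sub_right, inner_smul_right, inner_smul_right, hu0, huu]
    ring
  -- norms
  have hnormsum : ra ^ 2 + rb ^ 2 * γ = 1 := by
    rw [hra2, hrb2]; field_simp; ring
  have hψpself : ⟪ψp, ψp⟫_ℂ = 1 := by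
    nth_rewrite 1 [hψp]
    rw [inner_add_left, inner_smul_left, inner_smul_left,
      hinner0p, hup, Complex.conj_ofReal, Complex.conj_ofReal]
    rw [show ((ra:ℂ) * (ra:ℂ) + (rb:ℂ) * ((rb:ℂ) * (γ:ℂ))) = (((ra^2 + rb^2*γ : ℝ)):ℂ) by
      push_cast; ring, hnormsum]
    norm_num
  have hψmself : ⟪ψm, ψm⟫_ℂ = 1 := by
    nth_rewrite 1 [hψm]
    rw [inner_sub_left, inner_smul_left, inner_smul_left,
      hinner0m, hum, Complex.conj_ofReal, Complex.conj_ofReal]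
    rw [show ((ra:ℂ) * (ra:ℂ) - (rb:ℂ) * -((rb:ℂ) * (γ:ℂ))) = (((ra^2 + rb^2*γ : ℝ)):ℂ) by
      push_cast; ring, hnormsum]
    norm_num
  have hnp : ‖ψp‖ = 1 := by
    have h := inner_self_eq_norm_sq (𝕜 := ℂ) (E := V) ψp
    rw [hψpself] at h
    have h2 : ‖ψp‖ ^ 2 = 1 := by simpa using h.symm
    rw [← Real.sqrt_sq (norm_nonneg ψp), h2, Real.sqrt_one]
  have hnm : ‖ψm‖ = 1 := by
    have h := inner_self_eq_norm_sq (𝕜 := ℂ) (E := V) ψm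
    rw [hψmself] at h
    have h2 : ‖ψm‖ ^ 2 = 1 := by simpa using h.symm
    rw [← Real.sqrt_sq (norm_nonneg ψm), h2, Real.sqrt_one]
  -- action of Q
  have hQw0 : Q w0 = (rs : ℂ) • u := by
    rw [hQ, LinearMap.smul_apply, LinearMap.sum_apply, hu]
    congr 1
    refine Finset.sum_congr rfl fun j hj => ?_
    rw [LinearMap.smul_apply, LinearMap.add_apply, (hej0 j hj).1, (he0j j hj).1, add_zero]
  have hQv : ∀ k ∈ S, Q (wv k) = ((rs : ℂ) * (γf k : ℂ)) • w0 := by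
    intro k hk
    rw [hQ, LinearMap.smul_apply, LinearMap.sum_apply]
    have h1 : ∀ j ∈ S, ((γf j : ℂ) • (ej0 j + e0j j)) (wv k)
        = if j = k then (γf k : ℂ) • w0 else 0 := by
      intro j hj
      rw [LinearMap.smul_apply, LinearMap.add_apply, (hej0 j hj).2 k hk,
        (he0j j hj).2 k hk, zero_add]
      by_cases h : j = k
      · subst h; simp
      · simp [h]
    rw [Finset.sum_congr rfl h1, Finset.sum_ite_eq' S k (fun _ => (γf k : ℂ) • w0),
      if_pos hk, smul_smul]
  have hQu : Q u = ((γ : ℂ) * (rs : ℂ)) • w0 := by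
    rw [hu, map_sum]
    have h1 : ∀ j ∈ S, Q ((γf j : ℂ) • wv j) = ((γf j : ℂ) ^ 2 * (rs : ℂ)) • w0 := by
      intro j hj
      rw [map_smul, hQv j hj, smul_smul]
      ring_nf
    rw [Finset.sum_congr rfl h1, ← Finset.sum_smul]
    congr 1
    rw [hγtot]
    push_cast
    rw [Finset.sum_mul]
  -- scalar identities
  have rid1 : rb * γ * rs = rlam * ra := by
    rw [hlam, hrb, hb2, hra]
    field_simp
    ring_nf
    rw [sq, hγsq]
    ring
  have rid2 : ra * rs = rlam * rb := by
    rw [hlam, hrb, hb2, hra]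
    field_simp
  have cid1 : (rb : ℂ) * (γ : ℂ) * (rs : ℂ) = (rlam : ℂ) * (ra : ℂ) := by
    exact_mod_cast congrArg Complex.ofReal rid1
  have cid2 : (ra : ℂ) * (rs : ℂ) = (rlam : ℂ) * (rb : ℂ) := by
    exact_mod_cast congrArg Complex.ofReal rid2
  have hQψp : Q ψp = (rlam : ℂ) • ψp := by
    rw [hψp, map_add, map_smul, map_smul, hQw0, hQu, smul_smul, smul_smul,
      smul_add, smul_smul, smul_smul]
    rw [show (ra : ℂ) * (rs : ℂ) = (rlam : ℂ) * (rb : ℂ) from cid2,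
      show (rb : ℂ) * ((γ : ℂ) * (rs : ℂ)) = (rlam : ℂ) * (ra : ℂ) by rw [← cid1]; ring]
    exact add_comm _ _
  have hQψm : Q ψm = -((rlam : ℂ) • ψm) := by
    rw [hψm, map_sub, map_smul, map_smul, hQw0, hQu, smul_smul, smul_smul,
      smul_sub, smul_smul, smul_smul]
    rw [show (ra : ℂ) * (rs : ℂ) = (rlam : ℂ) * (rb : ℂ) from cid2,
      show (rb : ℂ) * ((γ : ℂ) * (rs : ℂ)) = (rlam : ℂ) * (ra : ℂ) by rw [← cid1]; ring]
    rw [neg_sub]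
  -- probability values
  have hP0p : ‖⟪w0, ψp⟫_ℂ‖ ^ 2 = 1 / 2 := by
    rw [hinner0p, Complex.norm_real, Real.norm_eq_abs, sq_abs, hra2]
  have hP0m : ‖⟪w0, ψm⟫_ℂ‖ ^ 2 = 1 / 2 := by
    rw [hinner0m, Complex.norm_real, Real.norm_eq_abs, sq_abs, hra2]
  have hPk : ∀ k ∈ S, ‖⟪wv k, ψp⟫_ℂ‖ ^ 2 = γf k ^ 2 / (2 * γ) ∧
      ‖⟪wv k, ψm⟫_ℂ‖ ^ 2 = γf k ^ 2 / (2 * γ) := by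
    intro k hk
    constructor
    · rw [hinnerkp k hk, Complex.norm_real, Real.norm_eq_abs, sq_abs, mul_pow, hrb2]
      ring
    · rw [hinnerkm k hk, Complex.norm_real, Real.norm_eq_abs, sq_abs, neg_pow, mul_pow, hrb2]
      ring_nf
  refine ⟨hnp, hnm, hQψp, hQψm, hP0p, hP0m, hPk, by rw [hP0p]; norm_num, ?_⟩
  intro k hk
  rw [(hPk k hk).1]
  field_simp
end
end
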